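/- arXiv:2003.04075 — 10 statements merged into one kernel-verified Lean document; each statement's English description precedes it below -/
import Mathlib

section
/- Let G be a commutative group and A, B finite nonempty subsets such that for every nonempty A' ⊆ A we have |A'+B|/|A'| ≥ |A+B|/|A| (Petridis condition). Then for any finite set Z, |A+B+Z|·|A| ≤ |A+B|·|A+Z|. -/
open scoped Pointwise

/-- Petridis: if |A'+B|/|A'| ≥ |A+B|/|A| for all nonempty A' ⊆ A, then
|A+B+Z|·|A| ≤ |A+B|·|A+Z|. -/
theorem stmt2 {G : Type*} [AddCommGroup G] [DecidableEq G]
    (A B : Finset G) (hA : A.Nonempty) (hB : B.Nonempty)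
    (hPet : ∀ A' ⊆ A, A'.Nonempty →
      ((A + B).card : ℝ) / (A.card : ℝ) ≤ ((A' + B).card : ℝ) / (A'.card : ℝ))
    (Z : Finset G) :
    ((A + B + Z).card : ℝ) * (A.card : ℝ) ≤ ((A + B).card : ℝ) * ((A + Z).card : ℝ) := by
  have key : ∀ A' ⊆ A, (A + B).card * A'.card ≤ (A' + B).card * A.card := by
    intro A' hA'
    rcases A'.eq_empty_or_nonempty with rfl | hne
    · simp
    have h := hPet A' hA' hne
    have hApos : (0:ℝ) < A.card := by exact_mod_cast hA.card_pos
    have hA'pos : (0:ℝ) < A'.card := by exact_mod_cast hne.card_pos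
    rw [div_le_div_iff₀ hApos hA'pos] at h
    exact_mod_cast h
  have h := Finset.pluennecke_petridis_inequality_add Z key
  rw [add_comm Z A, add_right_comm A Z B] at h
  exact_mod_cast h
end

section
/- For Hölder conjugates p, q > 1 with 1/p+1/q = 1 and 0 ≤ δ ≤ 1, we have (1-δ^p)^{1/p}(1-δ^q)^{1/q} ≥ (p^{1/p} q^{1/q}/2)·(1-δ^2). -/
open MeasureTheory

lemma aux_int (δ r : ℝ) (hδ1 : δ ≤ 1) (hr : 0 < r) :
    ∫ x in Set.Ioc δ 1, x ^ r = (1 - δ ^ (r+1)) / (r+1) := by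
  rw [← intervalIntegral.integral_of_le hδ1, integral_rpow (Or.inl (by linarith))]
  rw [Real.one_rpow]

/-- For Hölder conjugates p,q and 0 ≤ δ ≤ 1:
(1-δ^p)^(1/p)(1-δ^q)^(1/q) ≥ (p^(1/p) q^(1/q)/2)·(1-δ²). -/
theorem stmt4 (p q δ : ℝ) (hp : 1 < p) (hq : 1 < q) (hpq : 1/p + 1/q = 1)
    (hδ0 : 0 ≤ δ) (hδ1 : δ ≤ 1) :
    p ^ (1/p) * q ^ (1/q) / 2 * (1 - δ ^ 2) ≤
      (1 - δ ^ p) ^ (1/p) * (1 - δ ^ q) ^ (1/q) := by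
  have hp0 : (0:ℝ) < p := by linarith
  have hq0 : (0:ℝ) < q := by linarith
  have hconj : Real.HolderConjugate p q := Real.holderConjugate_iff.mpr ⟨hp, by rw [← one_div, ← one_div]; exact hpq⟩
  set μ : Measure ℝ := volume.restrict (Set.Ioc δ 1) with hμ
  have hfin : IsFiniteMeasure μ := by
    rw [hμ]
    exact ⟨by rw [Measure.restrict_apply_univ, Real.volume_Ioc]; exact ENNReal.ofReal_lt_top⟩
  have hae : ∀ᵐ x ∂μ, x ∈ Set.Ioc δ 1 := by
    rw [hμ]; exact ae_restrict_mem measurableSet_Ioc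
  have hmemf : ∀ r e : ℝ, 0 < r → MemLp (fun x : ℝ => x ^ r) (ENNReal.ofReal e) μ := by
    intro r e hr
    refine MemLp.of_bound ((Real.continuous_rpow_const hr.le).aestronglyMeasurable) 1 ?_
    filter_upwards [hae] with x hx
    rw [Real.norm_of_nonneg (Real.rpow_nonneg (le_trans hδ0 hx.1.le) r)]
    exact Real.rpow_le_one (le_trans hδ0 hx.1.le) hx.2 hr.le
  have key : ∫ a, (fun x : ℝ => x ^ (1/q)) a * (fun x : ℝ => x ^ (1/p)) a ∂μ ≤
      (∫ a, (fun x : ℝ => x ^ (1/q)) a ^ p ∂μ) ^ (1/p) *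
      (∫ a, (fun x : ℝ => x ^ (1/p)) a ^ q ∂μ) ^ (1/q) := by
    refine integral_mul_le_Lp_mul_Lq_of_nonneg hconj ?_ ?_ (hmemf _ _ (by positivity))
      (hmemf _ _ (by positivity))
    · filter_upwards [hae] with x hx
      exact Real.rpow_nonneg (le_trans hδ0 hx.1.le) _
    · filter_upwards [hae] with x hx
      exact Real.rpow_nonneg (le_trans hδ0 hx.1.le) _
  have e1 : ∫ a, (fun x : ℝ => x ^ (1/q)) a * (fun x : ℝ => x ^ (1/p)) a ∂μ = (1 - δ ^ 2) / 2 := by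
    have h1 : ∫ a, (fun x : ℝ => x ^ (1/q)) a * (fun x : ℝ => x ^ (1/p)) a ∂μ
        = ∫ x in Set.Ioc δ 1, x ^ (1:ℝ) := by
      rw [hμ]
      refine integral_congr_ae ?_
      filter_upwards [ae_restrict_mem measurableSet_Ioc] with x hx
      have hx0 : 0 < x := lt_of_le_of_lt hδ0 hx.1
      rw [← Real.rpow_add hx0]
      congr 1
      linarith [hpq]
    rw [h1, aux_int δ 1 hδ1 one_pos,
      show (1:ℝ) + 1 = ((2:ℕ):ℝ) by norm_num, Real.rpow_natCast]
    norm_num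
  have e2 : ∀ r s : ℝ, 1 < r → 1/s + 1/r = 1 →
      ∫ a, (fun x : ℝ => x ^ (1/s)) a ^ r ∂μ = (1 - δ ^ r) / r := by
    intro r s hr hrs
    have hr0 : (0:ℝ) < r := by linarith
    have hs0 : (0:ℝ) < s := by
      by_contra h
      push_neg at h
      have : 1/s ≤ 0 := div_nonpos_of_nonneg_of_nonpos zero_le_one h
      have : 1/r ≥ 1 := by linarith
      have : 1/r < 1 := by
        rw [div_lt_one hr0]; exact hr
      linarith
    have h1 : ∫ a, (fun x : ℝ => x ^ (1/s)) a ^ r ∂μ = ∫ x in Set.Ioc δ 1, x ^ (r - 1) := by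
      rw [hμ]
      refine integral_congr_ae ?_
      filter_upwards [ae_restrict_mem measurableSet_Ioc] with x hx
      have hx0 : (0:ℝ) ≤ x := le_trans hδ0 hx.1.le
      rw [← Real.rpow_mul hx0]
      congr 1
      field_simp at hrs ⊢
      nlinarith [hrs]
    rw [h1, aux_int δ (r-1) hδ1 (by linarith), show r - 1 + 1 = r by ring]
  have e2p := e2 p q hp (by linarith)
  have e2q := e2 q p hq hpq
  rw [e1, e2p, e2q] at key
  have hδp : δ ^ p ≤ 1 := Real.rpow_le_one hδ0 hδ1 hp0.le
  have hδq : δ ^ q ≤ 1 := Real.rpow_le_one hδ0 hδ1 hq0.le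
  rw [Real.div_rpow (by linarith) hp0.le, Real.div_rpow (by linarith) hq0.le,
    div_mul_div_comm, le_div_iff₀ (by positivity)] at key
  calc p ^ (1/p) * q ^ (1/q) / 2 * (1 - δ ^ 2)
      = (1 - δ ^ 2) / 2 * (p ^ (1/p) * q ^ (1/q)) := by ring
    _ ≤ _ := key
end

section
/- For any p,q > 1 with 1/p + 1/q = 1, p^{1/p} q^{1/q} ≤ 2, i.e., the constant c_p = p^{1/p}q^{1/q}/2 satisfies c_p ≤ 1. -/
/-- For Hölder conjugates p,q > 1: p^(1/p) q^(1/q) ≤ 2. -/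
theorem stmt5 (p q : ℝ) (hp : 1 < p) (hq : 1 < q) (hpq : 1/p + 1/q = 1) :
    p ^ (1/p) * q ^ (1/q) ≤ 2 := by
  have hp0 : 0 < p := lt_trans one_pos hp
  have hq0 : 0 < q := lt_trans one_pos hq
  have h := Real.geom_mean_le_arith_mean2_weighted
    (by positivity : (0:ℝ) ≤ 1/p) (by positivity : (0:ℝ) ≤ 1/q)
    hp0.le hq0.le hpq
  have h1 : 1/p * p = 1 := by field_simp
  have h2 : 1/q * q = 1 := by field_simp
  calc p ^ (1/p) * q ^ (1/q) ≤ 1/p * p + 1/q * q := h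
    _ = 2 := by rw [h1, h2]; norm_num
end

section
/- Let G be a commutative group, G' a subgroup, U ⊆ G' a finite nonempty set. Then the unrestricted tripling computed within G equals that computed within G': inf over finite nonempty A,B ⊆ G of |A+B+U|/(|A|^{1/2}|B|^{1/2}) equals the infimum over finite nonempty A,B ⊆ G'. -/
open scoped Pointwise
open Finset

private lemma fiber_sum_le' {G Q : Type*} [DecidableEq Q] (S : Finset G) (π : G → Q)
    (E : Finset Q) : ∑ e ∈ E, (S.filter fun x => π x = e).card ≤ S.card := by
  classical
  have h1 : (S.filter fun x => π x ∈ E).card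
      = ∑ e ∈ E, ((S.filter fun x => π x ∈ E).filter fun x => π x = e).card :=
    Finset.card_eq_sum_card_fiberwise (fun x hx => (Finset.mem_filter.mp hx).2)
  have h2 : ∀ e ∈ E, ((S.filter fun x => π x ∈ E).filter fun x => π x = e)
      = S.filter fun x => π x = e := by
    intro e he
    ext x
    simp only [Finset.mem_filter]
    constructor
    · rintro ⟨⟨hx, _⟩, h⟩; exact ⟨hx, h⟩
    · rintro ⟨hx, h⟩; exact ⟨⟨hx, h ▸ he⟩, h⟩
  calc ∑ e ∈ E, (S.filter fun x => π x = e).card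
      = (S.filter fun x => π x ∈ E).card := by
        rw [h1]; exact Finset.sum_congr rfl fun e he => by rw [h2 e he]
    _ ≤ S.card := Finset.card_filter_le _ _

private lemma key' {G : Type*} [AddCommGroup G] [DecidableEq G] (G' : AddSubgroup G)
    (U : Finset G) (_hUne : U.Nonempty) (hU : ∀ u ∈ U, u ∈ G')
    (A B : Finset G) (hA : A.Nonempty) (hB : B.Nonempty) :
    ∃ A' B' : Finset G, A'.Nonempty ∧ B'.Nonempty ∧ (↑A' : Set G) ⊆ (G' : Set G) ∧
      (↑B' : Set G) ⊆ (G' : Set G) ∧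
      ((A' + B' + U).card : ℝ) / (Real.sqrt A'.card * Real.sqrt B'.card)
        ≤ ((A + B + U).card : ℝ) / (Real.sqrt A.card * Real.sqrt B.card) := by
  classical
  set π : G →+ G ⧸ G' := QuotientAddGroup.mk' G' with hπ
  set Af : G ⧸ G' → Finset G := fun c => A.filter (fun x => π x = c) with hAf
  set Bf : G ⧸ G' → Finset G := fun d => B.filter (fun x => π x = d) with hBf
  set imA := A.image π with himA
  set imB := B.image π with himB
  have hAfne : ∀ c ∈ imA, (Af c).Nonempty := by
    intro c hc
    obtain ⟨a, ha, rfl⟩ := Finset.mem_image.mp hc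
    exact ⟨a, Finset.mem_filter.mpr ⟨ha, rfl⟩⟩
  have hBfne : ∀ d ∈ imB, (Bf d).Nonempty := by
    intro d hd
    obtain ⟨b, hb, rfl⟩ := Finset.mem_image.mp hd
    exact ⟨b, Finset.mem_filter.mpr ⟨hb, rfl⟩⟩
  have πU : ∀ u ∈ U, π u = 0 := fun u hu => (QuotientAddGroup.eq_zero_iff u).mpr (hU u hu)
  have subS : ∀ c d, Af c + Bf d + U ⊆ (A + B + U).filter (fun x => π x = c + d) := by
    intro c d x hx
    rw [Finset.mem_add] at hx
    obtain ⟨y, hy, u, hu, rfl⟩ := hx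
    rw [Finset.mem_add] at hy
    obtain ⟨a, ha, b, hb, rfl⟩ := hy
    have ha' := Finset.mem_filter.mp ha
    have hb' := Finset.mem_filter.mp hb
    refine Finset.mem_filter.mpr ⟨Finset.add_mem_add (Finset.add_mem_add ha'.1 hb'.1) hu, ?_⟩
    simp [map_add, ha'.2, hb'.2, πU u hu]
  -- row/column sum bounds
  have rowBound : ∀ d, ∑ c ∈ imA, (Af c + Bf d + U).card ≤ (A + B + U).card := by
    intro d
    calc ∑ c ∈ imA, (Af c + Bf d + U).card
        ≤ ∑ c ∈ imA, ((A + B + U).filter (fun x => π x = c + d)).card :=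
          Finset.sum_le_sum fun c _ => Finset.card_le_card (subS c d)
      _ = ∑ e ∈ imA.image (· + d), ((A + B + U).filter (fun x => π x = e)).card := by
          rw [Finset.sum_image (fun x _ y _ h => add_right_cancel h)]
      _ ≤ (A + B + U).card := fiber_sum_le' _ _ _
  have colBound : ∀ c, ∑ d ∈ imB, (Af c + Bf d + U).card ≤ (A + B + U).card := by
    intro c
    calc ∑ d ∈ imB, (Af c + Bf d + U).card
        ≤ ∑ d ∈ imB, ((A + B + U).filter (fun x => π x = c + d)).card :=
          Finset.sum_le_sum fun d _ => Finset.card_le_card (subS c d)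
      _ = ∑ e ∈ imB.image (c + ·), ((A + B + U).filter (fun x => π x = e)).card := by
          rw [Finset.sum_image (fun x _ y _ h => add_left_cancel h)]
      _ ≤ (A + B + U).card := fiber_sum_le' _ _ _
  -- partition of cardinalities
  have sumA : ∑ c ∈ imA, (Af c).card = A.card :=
    (Finset.card_eq_sum_card_fiberwise (fun x hx => Finset.mem_image_of_mem π hx)).symm
  have sumB : ∑ d ∈ imB, (Bf d).card = B.card :=
    (Finset.card_eq_sum_card_fiberwise (fun x hx => Finset.mem_image_of_mem π hx)).symm
  -- min pair
  have himAne : imA.Nonempty := hA.image π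
  have himBne : imB.Nonempty := hB.image π
  obtain ⟨⟨c₀, d₀⟩, hp, hmin⟩ := Finset.exists_min_image (imA ×ˢ imB)
    (fun p => ((Af p.1 + Bf p.2 + U).card : ℝ) /
        (Real.sqrt (Af p.1).card * Real.sqrt (Bf p.2).card))
    (himAne.product himBne)
  obtain ⟨hc₀, hd₀⟩ := Finset.mem_product.mp hp
  set K : ℝ := ((Af c₀ + Bf d₀ + U).card : ℝ) /
      (Real.sqrt (Af c₀).card * Real.sqrt (Bf d₀).card) with hK
  have hKnn : 0 ≤ K :=
    div_nonneg (Nat.cast_nonneg _) (mul_nonneg (Real.sqrt_nonneg _) (Real.sqrt_nonneg _))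
  have hKle : ∀ c ∈ imA, ∀ d ∈ imB,
      K * (Real.sqrt (Af c).card * Real.sqrt (Bf d).card) ≤ ((Af c + Bf d + U).card : ℝ) := by
    intro c hc d hd
    have h1 := hmin (c, d) (Finset.mem_product.mpr ⟨hc, hd⟩)
    have hpos : 0 < Real.sqrt (Af c).card * Real.sqrt (Bf d).card :=
      mul_pos (Real.sqrt_pos.mpr (Nat.cast_pos.mpr (hAfne c hc).card_pos))
        (Real.sqrt_pos.mpr (Nat.cast_pos.mpr (hBfne d hd).card_pos))
    calc K * (Real.sqrt (Af c).card * Real.sqrt (Bf d).card)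
        ≤ (((Af c + Bf d + U).card : ℝ) / (Real.sqrt (Af c).card * Real.sqrt (Bf d).card))
            * (Real.sqrt (Af c).card * Real.sqrt (Bf d).card) :=
          mul_le_mul_of_nonneg_right h1 hpos.le
      _ = ((Af c + Bf d + U).card : ℝ) := div_mul_cancel₀ _ hpos.ne'
  -- max fibers
  obtain ⟨cM, hcM, hcMmax⟩ := Finset.exists_max_image imA (fun c => (Af c).card) himAne
  obtain ⟨dM, hdM, hdMmax⟩ := Finset.exists_max_image imB (fun d => (Bf d).card) himBne
  set LA : ℝ := ∑ c ∈ imA, Real.sqrt (Af c).card with hLA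
  set LB : ℝ := ∑ d ∈ imB, Real.sqrt (Bf d).card with hLB
  set s : ℝ := ((A + B + U).card : ℝ) with hs
  have hLAnn : 0 ≤ LA := Finset.sum_nonneg fun c _ => Real.sqrt_nonneg _
  have hLBnn : 0 ≤ LB := Finset.sum_nonneg fun d _ => Real.sqrt_nonneg _
  have hsnn : 0 ≤ s := Nat.cast_nonneg _
  have f1 : K * (Real.sqrt (Bf dM).card * LA) ≤ s := by
    calc K * (Real.sqrt (Bf dM).card * LA)
        = ∑ c ∈ imA, K * (Real.sqrt (Af c).card * Real.sqrt (Bf dM).card) := by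
          rw [hLA, Finset.mul_sum, Finset.mul_sum]
          exact Finset.sum_congr rfl fun c _ => by ring
      _ ≤ ∑ c ∈ imA, ((Af c + Bf dM + U).card : ℝ) :=
          Finset.sum_le_sum fun c hc => hKle c hc dM hdM
      _ = ((∑ c ∈ imA, (Af c + Bf dM + U).card : ℕ) : ℝ) := by rw [Nat.cast_sum]
      _ ≤ s := Nat.cast_le.mpr (rowBound dM)
  have f2 : K * (Real.sqrt (Af cM).card * LB) ≤ s := by
    calc K * (Real.sqrt (Af cM).card * LB)
        = ∑ d ∈ imB, K * (Real.sqrt (Af cM).card * Real.sqrt (Bf d).card) := by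
          rw [hLB, Finset.mul_sum, Finset.mul_sum]
      _ ≤ ∑ d ∈ imB, ((Af cM + Bf d + U).card : ℝ) :=
          Finset.sum_le_sum fun d hd => hKle cM hcM d hd
      _ = ((∑ d ∈ imB, (Af cM + Bf d + U).card : ℕ) : ℝ) := by rw [Nat.cast_sum]
      _ ≤ s := Nat.cast_le.mpr (colBound cM)
  have f3 : (A.card : ℝ) ≤ Real.sqrt (Af cM).card * LA := by
    calc (A.card : ℝ) = ∑ c ∈ imA, ((Af c).card : ℝ) := by rw [← Nat.cast_sum, sumA]
      _ ≤ ∑ c ∈ imA, Real.sqrt (Af cM).card * Real.sqrt (Af c).card := by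
          refine Finset.sum_le_sum fun c hc => ?_
          have h1 : ((Af c).card : ℝ) = Real.sqrt (Af c).card * Real.sqrt (Af c).card :=
            (Real.mul_self_sqrt (Nat.cast_nonneg _)).symm
          refine le_trans (le_of_eq h1) ?_
          exact mul_le_mul_of_nonneg_right
            (Real.sqrt_le_sqrt (Nat.cast_le.mpr (hcMmax c hc))) (Real.sqrt_nonneg _)
      _ = Real.sqrt (Af cM).card * LA := by rw [hLA, Finset.mul_sum]
  have f4 : (B.card : ℝ) ≤ Real.sqrt (Bf dM).card * LB := by
    calc (B.card : ℝ) = ∑ d ∈ imB, ((Bf d).card : ℝ) := by rw [← Nat.cast_sum, sumB]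
      _ ≤ ∑ d ∈ imB, Real.sqrt (Bf dM).card * Real.sqrt (Bf d).card := by
          refine Finset.sum_le_sum fun d hd => ?_
          have h1 : ((Bf d).card : ℝ) = Real.sqrt (Bf d).card * Real.sqrt (Bf d).card :=
            (Real.mul_self_sqrt (Nat.cast_nonneg _)).symm
          refine le_trans (le_of_eq h1) ?_
          exact mul_le_mul_of_nonneg_right
            (Real.sqrt_le_sqrt (Nat.cast_le.mpr (hdMmax d hd))) (Real.sqrt_nonneg _)
      _ = Real.sqrt (Bf dM).card * LB := by rw [hLB, Finset.mul_sum]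
  -- the key inequality : K ≤ s / (√|A| √|B|)
  have hsq : (K * (Real.sqrt A.card * Real.sqrt B.card)) ^ 2 ≤ s ^ 2 := by
    have e1 : (K * (Real.sqrt A.card * Real.sqrt B.card)) ^ 2
        = (K * K) * ((Real.sqrt A.card * Real.sqrt A.card)
            * (Real.sqrt B.card * Real.sqrt B.card)) := by ring
    rw [e1, Real.mul_self_sqrt (Nat.cast_nonneg _), Real.mul_self_sqrt (Nat.cast_nonneg _)]
    have step1 : (K * K) * ((A.card : ℝ) * (B.card : ℝ))
        ≤ (K * K) * ((Real.sqrt (Af cM).card * LA) * (Real.sqrt (Bf dM).card * LB)) := by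
      refine mul_le_mul_of_nonneg_left (mul_le_mul f3 f4 (Nat.cast_nonneg _) ?_)
        (mul_nonneg hKnn hKnn)
      exact mul_nonneg (Real.sqrt_nonneg _) hLAnn
    have step2 : (K * K) * ((Real.sqrt (Af cM).card * LA) * (Real.sqrt (Bf dM).card * LB))
        = (K * (Real.sqrt (Bf dM).card * LA)) * (K * (Real.sqrt (Af cM).card * LB)) := by
      ring
    have step3 : (K * (Real.sqrt (Bf dM).card * LA)) * (K * (Real.sqrt (Af cM).card * LB))
        ≤ s * s :=
      mul_le_mul f1 f2 (mul_nonneg hKnn (mul_nonneg (Real.sqrt_nonneg _) hLBnn)) hsnn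
    calc (K * K) * ((A.card : ℝ) * (B.card : ℝ))
        ≤ _ := step1
      _ = _ := step2
      _ ≤ s * s := step3
      _ = s ^ 2 := (sq s).symm
  have hKfinal : K ≤ s / (Real.sqrt A.card * Real.sqrt B.card) := by
    have hdenpos : 0 < Real.sqrt A.card * Real.sqrt B.card :=
      mul_pos (Real.sqrt_pos.mpr (Nat.cast_pos.mpr hA.card_pos))
        (Real.sqrt_pos.mpr (Nat.cast_pos.mpr hB.card_pos))
    rw [le_div_iff₀ hdenpos]
    have hnn : 0 ≤ K * (Real.sqrt A.card * Real.sqrt B.card) :=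
      mul_nonneg hKnn hdenpos.le
    have := Real.sqrt_le_sqrt hsq
    rwa [Real.sqrt_sq hnn, Real.sqrt_sq hsnn] at this
  -- construct translated sets
  obtain ⟨a₀, ha₀⟩ := hAfne c₀ hc₀
  obtain ⟨b₀, hb₀⟩ := hBfne d₀ hd₀
  refine ⟨Af c₀ + {-a₀}, Bf d₀ + {-b₀}, ?_, ?_, ?_, ?_, ?_⟩
  · exact ⟨a₀ + -a₀, Finset.add_mem_add ha₀ (Finset.mem_singleton_self _)⟩
  · exact ⟨b₀ + -b₀, Finset.add_mem_add hb₀ (Finset.mem_singleton_self _)⟩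
  · intro x hx
    obtain ⟨y, hy, z, hz, rfl⟩ := Finset.mem_add.mp hx
    rw [Finset.mem_singleton] at hz
    subst hz
    have hy' := (Finset.mem_filter.mp hy).2
    have ha₀' := (Finset.mem_filter.mp ha₀).2
    have : π (y + -a₀) = 0 := by rw [map_add, map_neg, hy', ha₀', add_neg_cancel]
    exact (QuotientAddGroup.eq_zero_iff _).mp this
  · intro x hx
    obtain ⟨y, hy, z, hz, rfl⟩ := Finset.mem_add.mp hx
    rw [Finset.mem_singleton] at hz
    subst hz
    have hy' := (Finset.mem_filter.mp hy).2
    have hb₀' := (Finset.mem_filter.mp hb₀).2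
    have : π (y + -b₀) = 0 := by rw [map_add, map_neg, hy', hb₀', add_neg_cancel]
    exact (QuotientAddGroup.eq_zero_iff _).mp this
  · have trEq : Af c₀ + {-a₀} + (Bf d₀ + {-b₀}) + U = Af c₀ + Bf d₀ + U + {-a₀ + -b₀} := by
      rw [← Finset.singleton_add_singleton]
      abel
    have cardEq : (Af c₀ + {-a₀} + (Bf d₀ + {-b₀}) + U).card = (Af c₀ + Bf d₀ + U).card := by
      rw [trEq, Finset.card_add_singleton]
    rw [cardEq, Finset.card_add_singleton, Finset.card_add_singleton]
    exact hKfinal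

/-- Independence for β: for U ⊆ G', the tripling β(U) computed with A,B ranging
over finite subsets of G equals the one with A,B ranging over finite subsets of G'. -/
theorem stmt6 {G : Type*} [AddCommGroup G] [DecidableEq G] (G' : AddSubgroup G)
    (U : Finset G) (hUne : U.Nonempty) (hU : ∀ u ∈ U, u ∈ G') :
    sInf {r : ℝ | ∃ A B : Finset G, A.Nonempty ∧ B.Nonempty ∧
        r = ((A + B + U).card : ℝ) / (Real.sqrt A.card * Real.sqrt B.card)}
      = sInf {r : ℝ | ∃ A B : Finset G, A.Nonempty ∧ B.Nonempty ∧
        (↑A : Set G) ⊆ (G' : Set G) ∧ (↑B : Set G) ⊆ (G' : Set G) ∧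
        r = ((A + B + U).card : ℝ) / (Real.sqrt A.card * Real.sqrt B.card)} := by
  set S1 := {r : ℝ | ∃ A B : Finset G, A.Nonempty ∧ B.Nonempty ∧
      r = ((A + B + U).card : ℝ) / (Real.sqrt A.card * Real.sqrt B.card)} with hS1
  set S2 := {r : ℝ | ∃ A B : Finset G, A.Nonempty ∧ B.Nonempty ∧
      (↑A : Set G) ⊆ (G' : Set G) ∧ (↑B : Set G) ⊆ (G' : Set G) ∧
      r = ((A + B + U).card : ℝ) / (Real.sqrt A.card * Real.sqrt B.card)} with hS2
  have hsub : S2 ⊆ S1 := by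
    rintro r ⟨A, B, hA, hB, _, _, hr⟩
    exact ⟨A, B, hA, hB, hr⟩
  have hUG' : (↑U : Set G) ⊆ (G' : Set G) := fun x hx => hU x hx
  have hne2 : S2.Nonempty :=
    ⟨_, U, U, hUne, hUne, hUG', hUG', rfl⟩
  have hne1 : S1.Nonempty := hne2.mono hsub
  have hbdd1 : BddBelow S1 := by
    refine ⟨0, ?_⟩
    rintro r ⟨A, B, hA, hB, rfl⟩
    positivity
  have hbdd2 : BddBelow S2 := hbdd1.mono hsub
  refine le_antisymm (csInf_le_csInf hbdd1 hne2 hsub) ?_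
  refine le_csInf hne1 ?_
  rintro r ⟨A, B, hA, hB, rfl⟩
  obtain ⟨A', B', hA', hB', hA'G, hB'G, hle⟩ := key' G' U hUne hU A B hA hB
  refine le_trans (csInf_le hbdd2 ?_) hle
  exact ⟨A', B', hA', hB', hA'G, hB'G, rfl⟩
end

section
/- Let G be a commutative group, G' a subgroup, U ⊆ G' finite, and A, B finite nonempty subsets of G. Write A = ⋃_i A_i and B = ⋃_j B_j as the decompositions into nonempty intersections with cosets of G', and suppose A_1 is a largest piece of A. Then |A+B+U| ≥ (Σ_j |A_1+B_j+U|), and moreover |A+B+U| ≥ β(U,G')·|A_1|^{1/2}·Σ_j |B_j|^{1/2}, where β(U,G') is the tripling of U relative to G'. -/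
open scoped Pointwise

/-- Splitting A and B along cosets of G', with A_1 a largest piece of A:
|A+B+U| ≥ Σ_j |A_1+B_j+U| and |A+B+U| ≥ β(U,G')·|A_1|^(1/2)·Σ_j |B_j|^(1/2). -/
theorem stmt7 {G : Type*} [AddCommGroup G] [DecidableEq G] (G' : AddSubgroup G)
    (U : Finset G) (hUne : U.Nonempty) (hU : ∀ u ∈ U, u ∈ G')
    (n m : ℕ) (hn : 0 < n) (hm : 0 < m)
    (Ai : Fin n → Finset G) (Bj : Fin m → Finset G) (A B : Finset G)
    (hA : A = Finset.univ.biUnion Ai) (hB : B = Finset.univ.biUnion Bj)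
    (hAne : ∀ i, (Ai i).Nonempty) (hBne : ∀ j, (Bj j).Nonempty)
    (hAcoset : ∀ i, ∀ a ∈ Ai i, ∀ a' ∈ Ai i, a - a' ∈ G')
    (hBcoset : ∀ j, ∀ b ∈ Bj j, ∀ b' ∈ Bj j, b - b' ∈ G')
    (hAdist : ∀ i i', i ≠ i' → ∀ a ∈ Ai i, ∀ a' ∈ Ai i', a - a' ∉ G')
    (hBdist : ∀ j j', j ≠ j' → ∀ b ∈ Bj j, ∀ b' ∈ Bj j', b - b' ∉ G')
    (hmax : ∀ i, (Ai i).card ≤ (Ai ⟨0, hn⟩).card) :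
    (∑ j, (((Ai ⟨0, hn⟩) + Bj j + U).card : ℝ)) ≤ ((A + B + U).card : ℝ) ∧
    sInf {r : ℝ | ∃ A' B' : Finset G, A'.Nonempty ∧ B'.Nonempty ∧
        (↑A' : Set G) ⊆ (G' : Set G) ∧ (↑B' : Set G) ⊆ (G' : Set G) ∧
        r = ((A' + B' + U).card : ℝ) / (Real.sqrt A'.card * Real.sqrt B'.card)}
      * Real.sqrt (Ai ⟨0, hn⟩).card * (∑ j, Real.sqrt (Bj j).card)
      ≤ ((A + B + U).card : ℝ) := by
  set i₀ : Fin n := ⟨0, hn⟩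
  set A₁ := Ai i₀ with hA₁
  -- Part 1
  have hdisj : ∀ j j' : Fin m, j ≠ j' → Disjoint (A₁ + Bj j + U) (A₁ + Bj j' + U) := by
    intro j j' hjj'
    rw [Finset.disjoint_left]
    intro x hx hx'
    rw [Finset.mem_add] at hx hx'
    obtain ⟨y, hy, u, hu, hyu⟩ := hx
    rw [Finset.mem_add] at hy
    obtain ⟨a, ha, b, hb, hab⟩ := hy
    obtain ⟨y', hy', u', hu', hyu'⟩ := hx'
    rw [Finset.mem_add] at hy'
    obtain ⟨a', ha', b', hb', hab'⟩ := hy'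
    have h : a + b + u = a' + b' + u' := by rw [hab, hyu, hab', hyu']
    have hb1 : b - b' = (a' - a) + (u' - u) := by
      have h2 : (a' - a) + (u' - u) = (a' + b' + u') - (a + b + u) + (b - b') := by abel
      rw [h2, ← h]; abel
    exact hBdist j j' hjj' b hb b' hb'
      (hb1 ▸ add_mem (hAcoset i₀ a' ha' a ha) (sub_mem (hU u' hu') (hU u hu)))
  have hsub : ∀ j, A₁ + Bj j + U ⊆ A + B + U := by
    intro j
    apply Finset.add_subset_add_right
    apply Finset.add_subset_add
    · rw [hA]; intro x hx; exact Finset.mem_biUnion.2 ⟨i₀, Finset.mem_univ _, hx⟩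
    · rw [hB]; intro x hx; exact Finset.mem_biUnion.2 ⟨j, Finset.mem_univ _, hx⟩
  have part1nat : (∑ j, (A₁ + Bj j + U).card) ≤ (A + B + U).card := by
    have := Finset.card_biUnion (s := (Finset.univ : Finset (Fin m)))
      (t := fun j => A₁ + Bj j + U) (fun j _ j' _ h => hdisj j j' h)
    rw [← this]
    apply Finset.card_le_card
    intro x hx
    obtain ⟨j, _, hj⟩ := Finset.mem_biUnion.1 hx
    exact hsub j hj
  have part1 : (∑ j, (((A₁) + Bj j + U).card : ℝ)) ≤ ((A + B + U).card : ℝ) := by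
    rw [← Nat.cast_sum]
    exact_mod_cast part1nat
  refine ⟨part1, ?_⟩
  -- Part 2
  set S := {r : ℝ | ∃ A' B' : Finset G, A'.Nonempty ∧ B'.Nonempty ∧
      (↑A' : Set G) ⊆ (G' : Set G) ∧ (↑B' : Set G) ⊆ (G' : Set G) ∧
      r = ((A' + B' + U).card : ℝ) / (Real.sqrt A'.card * Real.sqrt B'.card)} with hS
  have hbdd : BddBelow S := by
    refine ⟨0, fun r hr => ?_⟩
    obtain ⟨A', B', _, _, _, _, hr⟩ := hr
    rw [hr]; positivity
  have key : ∀ j : Fin m, sInf S * (Real.sqrt A₁.card * Real.sqrt (Bj j).card)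
      ≤ ((A₁ + Bj j + U).card : ℝ) := by
    intro j
    obtain ⟨a₀, ha₀⟩ := hAne i₀
    obtain ⟨b₀, hb₀⟩ := hBne j
    set A' := A₁ + ({-a₀} : Finset G) with hA'
    set B' := Bj j + ({-b₀} : Finset G) with hB'
    have hcardA : A'.card = A₁.card := by
      rw [hA', Finset.add_singleton]
      exact Finset.card_image_of_injective _ (add_left_injective _)
    have hcardB : B'.card = (Bj j).card := by
      rw [hB', Finset.add_singleton]
      exact Finset.card_image_of_injective _ (add_left_injective _)
    have htrans : A' + B' + U = (A₁ + Bj j + U) + ({-a₀ - b₀} : Finset G) := by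
      have h1 : ({-a₀ - b₀} : Finset G) = {-a₀} + {-b₀} := by
        rw [Finset.singleton_add_singleton]; congr 1; abel
      rw [hA', hB', h1]
      abel
    have hcardS : (A' + B' + U).card = (A₁ + Bj j + U).card := by
      rw [htrans, Finset.add_singleton]
      exact Finset.card_image_of_injective _ (add_left_injective _)
    have hmem : ((A₁ + Bj j + U).card : ℝ) / (Real.sqrt A₁.card * Real.sqrt (Bj j).card) ∈ S := by
      refine ⟨A', B', ⟨a₀ + -a₀, Finset.add_mem_add ha₀ (Finset.mem_singleton_self _)⟩,
        ⟨b₀ + -b₀, Finset.add_mem_add hb₀ (Finset.mem_singleton_self _)⟩, ?_, ?_, ?_⟩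
      · intro x hx
        rw [hA'] at hx
        obtain ⟨a, ha, s, hs, has⟩ := Finset.mem_add.1 hx
        rw [Finset.mem_singleton] at hs
        have := hAcoset i₀ a ha a₀ ha₀
        rw [← has, hs]
        simpa [sub_eq_add_neg] using this
      · intro x hx
        rw [hB'] at hx
        obtain ⟨b, hb, s, hs, hbs⟩ := Finset.mem_add.1 hx
        rw [Finset.mem_singleton] at hs
        have := hBcoset j b hb b₀ hb₀
        rw [← hbs, hs]
        simpa [sub_eq_add_neg] using this
      · rw [hcardS, hcardA, hcardB]
    have hle := csInf_le hbdd hmem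
    have hpos : 0 < Real.sqrt A₁.card * Real.sqrt (Bj j).card := by
      have h1 : 0 < A₁.card := Finset.card_pos.2 (hAne i₀)
      have h2 : 0 < (Bj j).card := Finset.card_pos.2 (hBne j)
      have := Real.sqrt_pos.2 (by exact_mod_cast h1 : (0:ℝ) < A₁.card)
      have := Real.sqrt_pos.2 (by exact_mod_cast h2 : (0:ℝ) < (Bj j).card)
      positivity
    calc sInf S * (Real.sqrt A₁.card * Real.sqrt (Bj j).card)
        ≤ (((A₁ + Bj j + U).card : ℝ) / (Real.sqrt A₁.card * Real.sqrt (Bj j).card))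
            * (Real.sqrt A₁.card * Real.sqrt (Bj j).card) := by
          apply mul_le_mul_of_nonneg_right hle hpos.le
      _ = ((A₁ + Bj j + U).card : ℝ) := div_mul_cancel₀ _ hpos.ne'
  calc sInf S * Real.sqrt A₁.card * (∑ j, Real.sqrt (Bj j).card)
      = ∑ j, sInf S * (Real.sqrt A₁.card * Real.sqrt (Bj j).card) := by
        rw [Finset.mul_sum]; congr 1; funext j; ring
    _ ≤ ∑ j, (((A₁) + Bj j + U).card : ℝ) := Finset.sum_le_sum fun j _ => key j
    _ ≤ ((A + B + U).card : ℝ) := part1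
end

section
/- Let G be a commutative group and H a torsion-free subgroup of G. Let φ: G → G/H be the quotient map and C_φ the compression operator replacing each fiber A ∩ φ^{-1}(x) by {x} × {0,1,…,|A ∩ φ^{-1}(x)|−1} ⊆ (G/H) × ℤ. Then for finite sets A, B ⊆ G, C_φ(A) + C_φ(B) ⊆ C_φ(A+B). -/
open scoped Pointwise

/-- Cauchy–Davenport for two finsets each contained in a coset of a torsion-free subgroup. -/
lemma coset_cauchy_davenport {G : Type*} [AddCommGroup G] [DecidableEq G]
    (H : AddSubgroup G) (hH : ∀ g : H, g ≠ 0 → ¬IsOfFinAddOrder g)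
    {X Y : Finset G} (hX : X.Nonempty) (hY : Y.Nonempty)
    (hXc : ∀ a ∈ X, ∀ a' ∈ X, a - a' ∈ H) (hYc : ∀ b ∈ Y, ∀ b' ∈ Y, b - b' ∈ H) :
    X.card + Y.card - 1 ≤ (X + Y).card := by
  classical
  obtain ⟨a₀, ha₀⟩ := hX
  obtain ⟨b₀, hb₀⟩ := hY
  set X' : Finset H := X.attach.image (fun a => (⟨a.1 - a₀, hXc a.1 a.2 a₀ ha₀⟩ : H)) with hX'
  set Y' : Finset H := Y.attach.image (fun b => (⟨b.1 - b₀, hYc b.1 b.2 b₀ hb₀⟩ : H)) with hY'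
  have hcardX : X'.card = X.card := by
    rw [hX', Finset.card_image_of_injective, Finset.card_attach]
    intro a b hab
    exact Subtype.ext (by simpa [sub_left_inj] using congrArg Subtype.val hab)
  have hcardY : Y'.card = Y.card := by
    rw [hY', Finset.card_image_of_injective, Finset.card_attach]
    intro a b hab
    exact Subtype.ext (by simpa [sub_left_inj] using congrArg Subtype.val hab)
  have hX'ne : X'.Nonempty := by
    rw [← Finset.card_pos, hcardX, Finset.card_pos]; exact ⟨a₀, ha₀⟩
  have hY'ne : Y'.Nonempty := by
    rw [← Finset.card_pos, hcardY, Finset.card_pos]; exact ⟨b₀, hb₀⟩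
  haveI : IsAddTorsionFree H := isAddTorsionFree_iff_not_isOfFinAddOrder.2 (fun g hg => hH g hg)
  have hCD := cauchy_davenport_of_isAddTorsionFree hX'ne hY'ne
  rw [hcardX, hcardY] at hCD
  refine hCD.trans ?_
  have : ((X' + Y').image (fun h : H => (h : G) + (a₀ + b₀))).card ≤ (X + Y).card := by
    apply Finset.card_le_card
    intro z hz
    simp only [Finset.mem_image] at hz
    obtain ⟨h, hh, rfl⟩ := hz
    rw [Finset.mem_add] at hh
    obtain ⟨u, hu, v, hv, rfl⟩ := hh
    simp only [hX', hY', Finset.mem_image, Finset.mem_attach, true_and] at hu hv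
    obtain ⟨a, rfl⟩ := hu
    obtain ⟨b, rfl⟩ := hv
    rw [Finset.mem_add]
    refine ⟨a.1, a.2, b.1, b.2, ?_⟩
    push_cast
    abel
  refine le_trans (le_of_eq ?_) this
  rw [Finset.card_image_of_injective]
  intro u v huv
  exact Subtype.ext (by simpa using huv)

/-- Compressions shrink sumsets: if H is torsion-free, then
C_φ(A) + C_φ(B) ⊆ C_φ(A+B), where C_φ replaces each fiber of a finite set over a
point x of G/H by {x} × {0,…,|fiber|−1} ⊆ (G/H) × ℤ. -/
theorem stmt10 {G : Type*} [AddCommGroup G] [DecidableEq G]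
    (H : AddSubgroup G) (hH : ∀ g : H, g ≠ 0 → ¬IsOfFinAddOrder g)
    [DecidableEq (G ⧸ H)] (A B : Finset G) :
    (let φ : G → G ⧸ H := QuotientAddGroup.mk
     let C : Finset G → Set ((G ⧸ H) × ℤ) := fun S =>
       {p | p.1 ∈ S.image φ ∧ 0 ≤ p.2 ∧
            p.2 < ((S.filter (fun s => φ s = p.1)).card : ℤ)}
     C A + C B ⊆ C (A + B)) := by
  intro φ C z hz
  rw [Set.mem_add] at hz
  obtain ⟨p, hp, q, hq, rfl⟩ := hz
  obtain ⟨hpA, hp0, hpc⟩ := hp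
  obtain ⟨hqB, hq0, hqc⟩ := hq
  set X : Finset G := A.filter (fun s => φ s = p.1) with hXdef
  set Y : Finset G := B.filter (fun s => φ s = q.1) with hYdef
  have hXne : X.Nonempty := by
    rw [← Finset.card_pos]
    have : (0:ℤ) < X.card := lt_of_le_of_lt hp0 hpc
    exact_mod_cast this
  have hYne : Y.Nonempty := by
    rw [← Finset.card_pos]
    have : (0:ℤ) < Y.card := lt_of_le_of_lt hq0 hqc
    exact_mod_cast this
  obtain ⟨a₀, ha₀⟩ := hXne
  obtain ⟨b₀, hb₀⟩ := hYne
  have hXcoset : ∀ a ∈ X, ∀ a' ∈ X, a - a' ∈ H := by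
    intro a ha a' ha'
    rw [hXdef, Finset.mem_filter] at ha ha'
    have : φ a = φ a' := ha.2.trans ha'.2.symm
    rwa [QuotientAddGroup.eq, neg_add_eq_sub, ← neg_sub, neg_mem_iff] at this
  have hYcoset : ∀ b ∈ Y, ∀ b' ∈ Y, b - b' ∈ H := by
    intro a ha a' ha'
    rw [hYdef, Finset.mem_filter] at ha ha'
    have : φ a = φ a' := ha.2.trans ha'.2.symm
    rwa [QuotientAddGroup.eq, neg_add_eq_sub, ← neg_sub, neg_mem_iff] at this
  have hCD := coset_cauchy_davenport H hH ⟨a₀, ha₀⟩ ⟨b₀, hb₀⟩ hXcoset hYcoset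
  -- X + Y ⊆ fiber of A + B over p.1 + q.1
  have hsub : X + Y ⊆ (A + B).filter (fun s => φ s = (p + q).1) := by
    intro z hz
    rw [Finset.mem_add] at hz
    obtain ⟨a, ha, b, hb, rfl⟩ := hz
    rw [hXdef, Finset.mem_filter] at ha
    rw [hYdef, Finset.mem_filter] at hb
    rw [Finset.mem_filter]
    refine ⟨Finset.add_mem_add ha.1 hb.1, ?_⟩
    show QuotientAddGroup.mk (a + b) = p.1 + q.1
    rw [QuotientAddGroup.mk_add]
    exact congrArg₂ (· + ·) ha.2 hb.2
  refine ⟨?_, add_nonneg hp0 hq0, ?_⟩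
  · -- (p+q).1 ∈ image
    rw [Finset.mem_image] at hpA hqB ⊢
    obtain ⟨a, ha, hpa⟩ := hpA
    obtain ⟨b, hb, hqb⟩ := hqB
    refine ⟨a + b, Finset.add_mem_add ha hb, ?_⟩
    show QuotientAddGroup.mk (a + b) = p.1 + q.1
    rw [QuotientAddGroup.mk_add]
    exact congrArg₂ (· + ·) hpa hqb
  · have h1 : (X + Y).card ≤ ((A + B).filter (fun s => φ s = (p + q).1)).card :=
      Finset.card_le_card hsub
    have h3 : (p + q).2 = p.2 + q.2 := rfl
    have hx1 : 1 ≤ X.card := Finset.card_pos.mpr ⟨a₀, ha₀⟩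
    have hy1 : 1 ≤ Y.card := Finset.card_pos.mpr ⟨b₀, hb₀⟩
    omega
end

section
/- Let G be a commutative group, H its torsion subgroup assumed finite, φ: G → G/H the quotient map, U ⊆ G finite, U' = φ(U). Then β(U) ≤ β(U'): for any finite nonempty A', B' ⊆ G/H, taking A = φ^{-1}(A'), B = φ^{-1}(B') gives |A+B+U| ≤ |H|·|A'+B'+U'|, |A| = |H||A'|, |B| = |H||B'|, hence |A+B+U|/(|A||B|)^{1/2} ≤ |A'+B'+U'|/(|A'||B'|)^{1/2}. -/
open scoped Pointwise

/-- Projections to the quotient by a finite torsion subgroup do not decrease β: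
β(U) ≤ β(U') where U' = φ(U), φ : G → G/torsion(G). -/
theorem stmt12 {G : Type*} [AddCommGroup G] [DecidableEq G]
    [DecidableEq (G ⧸ AddCommGroup.torsion G)]
    (hfin : Finite (AddCommGroup.torsion G))
    (U : Finset G) (hU : U.Nonempty) :
    sInf {r : ℝ | ∃ A B : Finset G, A.Nonempty ∧ B.Nonempty ∧
        r = ((A + B + U).card : ℝ) / (Real.sqrt A.card * Real.sqrt B.card)}
      ≤ sInf {r : ℝ | ∃ A' B' : Finset (G ⧸ AddCommGroup.torsion G),
          A'.Nonempty ∧ B'.Nonempty ∧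
          r = ((A' + B' + U.image (QuotientAddGroup.mk : G → G ⧸ AddCommGroup.torsion G)).card : ℝ)
              / (Real.sqrt A'.card * Real.sqrt B'.card)} := by
  classical
  set H := AddCommGroup.torsion G with hH
  set φ : G → G ⧸ H := QuotientAddGroup.mk with hφdef
  have hHset : (H : Set G).Finite := Set.toFinite _
  set Hs : Finset G := hHset.toFinset with hHsdef
  have hmem : ∀ x : G, x ∈ Hs ↔ x ∈ H := by
    intro x; simp [hHsdef, Set.Finite.mem_toFinset]
  have hHs0 : (0 : G) ∈ Hs := (hmem 0).2 H.zero_mem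
  have hHspos : 0 < Hs.card := Finset.card_pos.2 ⟨0, hHs0⟩
  have hφh : ∀ h ∈ Hs, φ h = 0 := fun h hh =>
    (QuotientAddGroup.eq_zero_iff h).2 ((hmem h).1 hh)
  -- fiber bound
  have hfiber : ∀ S : Finset G, S.card ≤ Hs.card * (S.image φ).card := by
    intro S
    refine Finset.card_le_mul_card_image S Hs.card ?_
    intro a ha
    obtain ⟨x₀, hx₀S, hx₀⟩ := Finset.mem_image.1 ha
    refine Finset.card_le_card_of_injOn (fun x => x - x₀) ?_ ?_
    · intro x hx
      simp only [Finset.mem_coe, Finset.mem_filter] at hx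
      refine (hmem _).2 ?_
      have : φ x = φ x₀ := hx.2.trans hx₀.symm
      exact (QuotientAddGroup.eq_iff_sub_mem).1 this
    · intro x _ y _ hxy
      exact sub_left_injective hxy
  -- lifting construction
  have key : ∀ A' : Finset (G ⧸ H), A'.Nonempty → ∃ A : Finset G, A.Nonempty ∧
      A.image φ = A' ∧ A.card = A'.card * Hs.card := by
    intro A' hA'
    refine ⟨(A' ×ˢ Hs).image (fun p => Quotient.out p.1 + p.2), ?_, ?_, ?_⟩
    · exact (hA'.product ⟨0, hHs0⟩).image _
    · ext q
      simp only [Finset.mem_image, Finset.mem_product]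
      constructor
      · rintro ⟨x, ⟨⟨a, h⟩, ⟨haA, hhH⟩, rfl⟩, rfl⟩
        have : φ (Quotient.out a + h) = a := by
          have h1 : φ (Quotient.out a) = a := QuotientAddGroup.out_eq' a
          have h2 : φ h = 0 := hφh h hhH
          show φ _ = a
          rw [show φ (Quotient.out a + h) = φ (Quotient.out a) + φ h from rfl, h1, h2, add_zero]
        rwa [this]
      · intro hq
        exact ⟨Quotient.out q + 0, ⟨⟨q, 0⟩, ⟨hq, hHs0⟩, rfl⟩, by
          rw [add_zero]; exact QuotientAddGroup.out_eq' q⟩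
    · rw [Finset.card_image_of_injOn, Finset.card_product]
      rintro ⟨a, h⟩ hah ⟨b, k⟩ hbk heq
      simp only [Finset.mem_coe, Finset.mem_product] at hah hbk
      have heq' : Quotient.out a + h = Quotient.out b + k := heq
      have hout : ∀ (c : G ⧸ H) (x : G), x ∈ Hs → φ (Quotient.out c + x) = c := by
        intro c x hx
        calc φ (Quotient.out c + x) = φ (Quotient.out c) + φ x := rfl
          _ = c := by rw [show φ (Quotient.out c) = c from QuotientAddGroup.out_eq' c, hφh x hx, add_zero]
      have hab : a = b := by
        rw [← hout a h hah.2, ← hout b k hbk.2, heq']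
      subst hab
      have hk : h = k := add_left_cancel heq'
      rw [hk]
  -- main
  have hbdd : BddBelow {r : ℝ | ∃ A B : Finset G, A.Nonempty ∧ B.Nonempty ∧
      r = ((A + B + U).card : ℝ) / (Real.sqrt A.card * Real.sqrt B.card)} := by
    refine ⟨0, ?_⟩
    rintro r ⟨A, B, hA, hB, rfl⟩
    positivity
  refine le_csInf ⟨_, {0}, {0}, Finset.singleton_nonempty _, Finset.singleton_nonempty _, rfl⟩ ?_
  rintro r' ⟨A', B', hA', hB', rfl⟩
  obtain ⟨A, hA, hAim, hAcard⟩ := key A' hA'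
  obtain ⟨B, hB, hBim, hBcard⟩ := key B' hB'
  have hmk : ∀ S : Finset G, S.image φ = S.image (QuotientAddGroup.mk' H) := by
    intro S; rfl
  have himg : (A + B + U).image φ = A' + B' + U.image φ := by
    rw [hmk, Finset.image_add, Finset.image_add, ← hmk, ← hmk, ← hmk, hAim, hBim]
  have hcardle : ((A + B + U).card : ℝ) ≤ (Hs.card : ℝ) * ((A' + B' + U.image φ).card : ℝ) := by
    have := hfiber (A + B + U)
    rw [himg] at this
    exact_mod_cast this
  refine le_trans (csInf_le hbdd ⟨A, B, hA, hB, rfl⟩) ?_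
  have hA'pos : (0:ℝ) < A'.card := by exact_mod_cast Finset.card_pos.2 hA'
  have hB'pos : (0:ℝ) < B'.card := by exact_mod_cast Finset.card_pos.2 hB'
  have hHpos : (0:ℝ) < Hs.card := by exact_mod_cast hHspos
  have hsA : Real.sqrt A.card = Real.sqrt A'.card * Real.sqrt Hs.card := by
    rw [hAcard]; push_cast; rw [Real.sqrt_mul (by positivity)]
  have hsB : Real.sqrt B.card = Real.sqrt B'.card * Real.sqrt Hs.card := by
    rw [hBcard]; push_cast; rw [Real.sqrt_mul (by positivity)]
  have hs2 : Real.sqrt Hs.card * Real.sqrt Hs.card = Hs.card :=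
    Real.mul_self_sqrt (by positivity)
  rw [hsA, hsB]
  have hden : Real.sqrt A'.card * Real.sqrt Hs.card * (Real.sqrt B'.card * Real.sqrt Hs.card)
      = Real.sqrt A'.card * Real.sqrt B'.card * Hs.card := by
    calc Real.sqrt A'.card * Real.sqrt Hs.card * (Real.sqrt B'.card * Real.sqrt Hs.card)
        = Real.sqrt A'.card * Real.sqrt B'.card * (Real.sqrt Hs.card * Real.sqrt Hs.card) := by
          ring
      _ = _ := by rw [hs2]
  rw [hden]
  have hsApos : (0:ℝ) < Real.sqrt A'.card := Real.sqrt_pos.2 hA'pos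
  have hsBpos : (0:ℝ) < Real.sqrt B'.card := Real.sqrt_pos.2 hB'pos
  have hstep : ((A + B + U).card : ℝ) / (Real.sqrt A'.card * Real.sqrt B'.card * Hs.card)
      ≤ ((Hs.card : ℝ) * ((A' + B' + U.image φ).card : ℝ)) /
        (Real.sqrt A'.card * Real.sqrt B'.card * Hs.card) :=
    div_le_div_of_nonneg_right hcardle (by positivity)
  have heq2 : ((Hs.card : ℝ) * ((A' + B' + U.image φ).card : ℝ)) /
        (Real.sqrt A'.card * Real.sqrt B'.card * Hs.card)
      = ((A' + B' + U.image φ).card : ℝ) / (Real.sqrt A'.card * Real.sqrt B'.card) := by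
    rw [mul_comm (Real.sqrt (A'.card : ℝ) * Real.sqrt (B'.card : ℝ)) ((Hs.card : ℝ)),
      mul_div_mul_left _ _ hHpos.ne']
  have hfin2 := hstep.trans heq2.le
  convert hfin2 using 4
  congr!
end

section
/- Let U be a finite subset of a commutative group not contained in a single coset of its torsion subgroup. Then for all finite nonempty sets A, B, |A+B+U| ≥ |A| + |B|, and hence β(U) ≥ 2. -/
open scoped Pointwise

open Finset

private lemma zsmul_inj13 {G : Type*} [AddCommGroup G] {d : G} (hd : ¬ IsOfFinAddOrder d)
    {n m : ℤ} (h : n • d = m • d) : n = m := by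
  by_contra hne
  exact hd (isOfFinAddOrder_iff_zsmul_eq_zero.2
    ⟨n - m, sub_ne_zero.2 hne, by rw [sub_smul, h, sub_self]⟩)

private lemma fiber_card_add13 {G : Type*} [AddCommGroup G] [DecidableEq G] {d : G}
    (hd : ¬ IsOfFinAddOrder d) (X Y : Finset G) (hX : X.Nonempty) (hY : Y.Nonempty)
    (hXc : ∀ x ∈ X, ∀ x' ∈ X, x - x' ∈ AddSubgroup.zmultiples d)
    (hYc : ∀ y ∈ Y, ∀ y' ∈ Y, y - y' ∈ AddSubgroup.zmultiples d) :
    X.card + Y.card ≤ (X + Y).card + 1 := by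
  classical
  obtain ⟨gx, hgx⟩ := hX
  obtain ⟨gy, hgy⟩ := hY
  let f : G → G → ℤ := fun g x => if h : ∃ n : ℤ, n • d = x - g then h.choose else 0
  have hf : ∀ g x : G, x - g ∈ AddSubgroup.zmultiples d → (f g x) • d = x - g := by
    intro g x h
    have h' : ∃ n : ℤ, n • d = x - g := AddSubgroup.mem_zmultiples_iff.1 h
    simp only [f, dif_pos h']
    exact h'.choose_spec
  have hXinj : Set.InjOn (f gx) X := by
    intro x hx x' hx' hxx
    have h1 := hf gx x (hXc x hx gx hgx)
    have h2 := hf gx x' (hXc x' hx' gx hgx)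
    rw [hxx, h2] at h1
    have := sub_left_injective h1
    simpa using this.symm
  have hYinj : Set.InjOn (f gy) Y := by
    intro y hy y' hy' hyy
    have h1 := hf gy y (hYc y hy gy hgy)
    have h2 := hf gy y' (hYc y' hy' gy hgy)
    rw [hyy, h2] at h1
    have := sub_left_injective h1
    simpa using this.symm
  have hsub : X.image (f gx) + Y.image (f gy) ⊆ (X + Y).image (f (gx + gy)) := by
    intro z hz
    rw [Finset.mem_add] at hz
    obtain ⟨n, hn, m, hm, rfl⟩ := hz
    obtain ⟨x, hx, rfl⟩ := Finset.mem_image.1 hn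
    obtain ⟨y, hy, rfl⟩ := Finset.mem_image.1 hm
    have hmem : (x + y) - (gx + gy) ∈ AddSubgroup.zmultiples d := by
      have : (x + y) - (gx + gy) = (x - gx) + (y - gy) := by abel
      rw [this]
      exact AddSubgroup.add_mem _ (hXc x hx gx hgx) (hYc y hy gy hgy)
    have heq : f (gx + gy) (x + y) = f gx x + f gy y := by
      apply zsmul_inj13 hd
      rw [hf _ _ hmem, add_smul, hf _ _ (hXc x hx gx hgx), hf _ _ (hYc y hy gy hgy)]
      abel
    exact Finset.mem_image.2 ⟨x + y, Finset.add_mem_add hx hy, heq⟩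
  have hcd : (X.image (f gx)).card + (Y.image (f gy)).card - 1
      ≤ (X.image (f gx) + Y.image (f gy)).card :=
    cauchy_davenport_add_of_linearOrder_isCancelAdd
      (⟨f gx gx, Finset.mem_image_of_mem _ hgx⟩)
      (⟨f gy gy, Finset.mem_image_of_mem _ hgy⟩)
  have h1 : (X.image (f gx)).card = X.card := Finset.card_image_of_injOn hXinj
  have h2 : (Y.image (f gy)).card = Y.card := Finset.card_image_of_injOn hYinj
  have h3 : (X.image (f gx) + Y.image (f gy)).card ≤ (X + Y).card :=
    le_trans (Finset.card_le_card hsub) (Finset.card_image_le)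
  have hXpos : 1 ≤ X.card := Finset.card_pos.2 ⟨gx, hgx⟩
  omega

private lemma key_card13 {G : Type*} [AddCommGroup G] [DecidableEq G]
    (U : Finset G) {u0 u1 : G} (hu0 : u0 ∈ U) (hu1 : u1 ∈ U)
    (hd : ¬ IsOfFinAddOrder (u1 - u0)) :
    ∀ A B : Finset G, A.Nonempty → B.Nonempty →
      A.card + B.card ≤ (A + B + U).card := by
  classical
  set d := u1 - u0 with hdd
  set Z := AddSubgroup.zmultiples d with hZ
  let π : G →+ G ⧸ Z := QuotientAddGroup.mk' Z
  have hsub : ∀ x y : G, π x = π y → x - y ∈ Z := by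
    intro x y h
    have : π (x - y) = 0 := by rw [map_sub, h, sub_self]
    exact (QuotientAddGroup.eq_zero_iff _).1 this
  have hπu : π u1 = π u0 := by
    have : π (u1 - u0) = 0 := (QuotientAddGroup.eq_zero_iff _).2 (by
      rw [hZ, ← hdd]; exact AddSubgroup.mem_zmultiples d)
    rw [map_sub, sub_eq_zero] at this
    exact this
  have key : ∀ A B : Finset G, A.Nonempty → B.Nonempty →
      (B.image π).card ≤ (A.image π).card → A.card + B.card ≤ (A + B + U).card := by
    intro A B hA hB hST
    obtain ⟨j0, hj0T, hj0max⟩ := (B.image π).exists_max_image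
      (fun j => (B.filter fun b => π b = j).card) (hB.image π)
    obtain ⟨b0, hb0B, hb0⟩ := Finset.mem_image.1 hj0T
    set Bq := B.filter fun b => π b = j0 with hBq
    have hBqne : Bq.Nonempty := ⟨b0, Finset.mem_filter.2 ⟨hb0B, hb0⟩⟩
    set C := Bq + ({u0, u1} : Finset G) with hC
    have hu01 : u0 ≠ u1 := by
      intro h
      apply hd
      rw [hdd, h, sub_self]
      exact IsOfFinAddOrder.zero
    have hBqc : ∀ x ∈ Bq, ∀ x' ∈ Bq, x - x' ∈ Z := by
      intro x hx x' hx'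
      exact hsub x x' (by rw [(Finset.mem_filter.1 hx).2, (Finset.mem_filter.1 hx').2])
    have hUc : ∀ x ∈ ({u0, u1} : Finset G), ∀ x' ∈ ({u0, u1} : Finset G), x - x' ∈ Z := by
      intro x hx x' hx'
      have hx1 : π x = π u0 := by
        rcases Finset.mem_insert.1 hx with h | h
        · rw [h]
        · rw [Finset.mem_singleton.1 h, hπu]
      have hx2 : π x' = π u0 := by
        rcases Finset.mem_insert.1 hx' with h | h
        · rw [h]
        · rw [Finset.mem_singleton.1 h, hπu]
      exact hsub x x' (by rw [hx1, hx2])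
    have hCcard : Bq.card + 1 ≤ C.card := by
      have := fiber_card_add13 hd Bq ({u0, u1} : Finset G) hBqne
        ⟨u0, Finset.mem_insert_self _ _⟩ hBqc hUc
      rw [Finset.card_pair hu01, ← hC] at this
      omega
    have hCc : ∀ c ∈ C, π c = j0 + π u0 := by
      intro c hc
      rw [hC, Finset.mem_add] at hc
      obtain ⟨b, hb, u, hu, rfl⟩ := hc
      have hπb : π b = j0 := (Finset.mem_filter.1 hb).2
      have hπuu : π u = π u0 := by
        rcases Finset.mem_insert.1 hu with h | h
        · rw [h]
        · rw [Finset.mem_singleton.1 h, hπu]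
      rw [map_add, hπb, hπuu]
    -- fibers of A
    set S := A.image π with hS
    have hdisj : ∀ i ∈ S, ∀ i' ∈ S, i ≠ i' →
        Disjoint ((A + B + U).filter fun w => π w = i + j0 + π u0)
          ((A + B + U).filter fun w => π w = i' + j0 + π u0) := by
      intro i _ i' _ hne
      rw [Finset.disjoint_left]
      intro w hw hw'
      have h1 := (Finset.mem_filter.1 hw).2
      have h2 := (Finset.mem_filter.1 hw').2
      rw [h1] at h2
      exact hne (by
        have := add_right_cancel (a := i) (b := j0 + π u0) (c := i')
        rw [add_assoc, add_assoc] at h2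
        exact this h2)
    have hfib : ∀ i ∈ S, (A.filter fun a => π a = i).card + Bq.card
        ≤ ((A + B + U).filter fun w => π w = i + j0 + π u0).card := by
      intro i hi
      obtain ⟨a0, ha0A, ha0⟩ := Finset.mem_image.1 hi
      set Ai := A.filter fun a => π a = i with hAi
      have hAine : Ai.Nonempty := ⟨a0, Finset.mem_filter.2 ⟨ha0A, ha0⟩⟩
      have hAic : ∀ x ∈ Ai, ∀ x' ∈ Ai, x - x' ∈ Z := by
        intro x hx x' hx'
        exact hsub x x' (by rw [(Finset.mem_filter.1 hx).2, (Finset.mem_filter.1 hx').2])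
      have hCc' : ∀ x ∈ C, ∀ x' ∈ C, x - x' ∈ Z := by
        intro x hx x' hx'
        exact hsub x x' (by rw [hCc x hx, hCc x' hx'])
      have hCne : C.Nonempty := by
        obtain ⟨b, hb⟩ := hBqne
        exact ⟨b + u0, Finset.add_mem_add hb (Finset.mem_insert_self _ _)⟩
      have h1 : Ai.card + C.card ≤ (Ai + C).card + 1 :=
        fiber_card_add13 hd Ai C hAine hCne hAic hCc'
      have h2 : Ai + C ⊆ (A + B + U).filter fun w => π w = i + j0 + π u0 := by
        intro z hz
        rw [Finset.mem_add] at hz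
        obtain ⟨a, ha, c, hc, rfl⟩ := hz
        have haA : a ∈ A := (Finset.mem_filter.1 ha).1
        have hmem : a + c ∈ A + B + U := by
          rw [hC, Finset.mem_add] at hc
          obtain ⟨b, hb, u, hu, rfl⟩ := hc
          have hbB : b ∈ B := (Finset.mem_filter.1 hb).1
          have huU : u ∈ U := by
            rcases Finset.mem_insert.1 hu with h | h
            · rw [h]; exact hu0
            · rw [Finset.mem_singleton.1 h]; exact hu1
          have : a + (b + u) = (a + b) + u := by abel
          rw [this]
          exact Finset.add_mem_add (Finset.add_mem_add haA hbB) huU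
        refine Finset.mem_filter.2 ⟨hmem, ?_⟩
        rw [map_add, (Finset.mem_filter.1 ha).2, hCc c hc, add_assoc]
      have h3 := Finset.card_le_card h2
      omega
    -- put together
    have hsumle : ∑ i ∈ S, ((A + B + U).filter fun w => π w = i + j0 + π u0).card
        ≤ (A + B + U).card := by
      rw [← Finset.card_biUnion hdisj]
      exact Finset.card_le_card (Finset.biUnion_subset.2 fun i _ => Finset.filter_subset _ _)
    have hAsum : A.card = ∑ i ∈ S, (A.filter fun a => π a = i).card :=
      Finset.card_eq_sum_card_image π A
    have hBsum : B.card ≤ (B.image π).card * Bq.card := by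
      rw [Finset.card_eq_sum_card_image π B]
      calc ∑ j ∈ B.image π, (B.filter fun b => π b = j).card
          ≤ ∑ _j ∈ B.image π, Bq.card := Finset.sum_le_sum (fun j hj => hj0max j hj)
        _ = (B.image π).card * Bq.card := by rw [Finset.sum_const, smul_eq_mul]
    calc A.card + B.card ≤ A.card + S.card * Bq.card := by
          have : (B.image π).card * Bq.card ≤ S.card * Bq.card :=
            Nat.mul_le_mul_right _ hST
          omega
      _ = ∑ i ∈ S, ((A.filter fun a => π a = i).card + Bq.card) := by
          rw [Finset.sum_add_distrib, ← hAsum, Finset.sum_const, smul_eq_mul]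
      _ ≤ ∑ i ∈ S, ((A + B + U).filter fun w => π w = i + j0 + π u0).card :=
          Finset.sum_le_sum hfib
      _ ≤ (A + B + U).card := hsumle
  intro A B hA hB
  rcases le_total ((B.image π).card) ((A.image π).card) with h | h
  · exact key A B hA hB h
  · have := key B A hB hA h
    rwa [add_comm B A, add_comm B.card A.card] at this

/-- If U is not contained in a single coset of the torsion subgroup, then
|A+B+U| ≥ |A| + |B| for all finite nonempty A, B, and hence β(U) ≥ 2. -/
theorem stmt13 {G : Type*} [AddCommGroup G] [DecidableEq G]
    (U : Finset G) (hU : U.Nonempty)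
    (hcoset : ¬ ∃ x : G, ∀ u ∈ U, u - x ∈ AddCommGroup.torsion G) :
    (∀ A B : Finset G, A.Nonempty → B.Nonempty →
      (A.card : ℝ) + (B.card : ℝ) ≤ ((A + B + U).card : ℝ)) ∧
    2 ≤ sInf {r : ℝ | ∃ A B : Finset G, A.Nonempty ∧ B.Nonempty ∧
        r = ((A + B + U).card : ℝ) / (Real.sqrt A.card * Real.sqrt B.card)} := by
  classical
  obtain ⟨u0, hu0⟩ := hU
  push_neg at hcoset
  obtain ⟨u1, hu1, hd⟩ := hcoset u0
  have hd' : ¬ IsOfFinAddOrder (u1 - u0) := by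
    intro h
    exact hd ((AddCommGroup.mem_torsion _).2 h)
  have hkey := key_card13 U hu0 hu1 hd'
  have part1 : ∀ A B : Finset G, A.Nonempty → B.Nonempty →
      (A.card : ℝ) + (B.card : ℝ) ≤ ((A + B + U).card : ℝ) := by
    intro A B hA hB
    exact_mod_cast hkey A B hA hB
  refine ⟨part1, ?_⟩
  apply le_csInf
  · exact ⟨_, {u0}, {u0}, Finset.singleton_nonempty u0, Finset.singleton_nonempty u0, rfl⟩
  · rintro r ⟨A, B, hA, hB, rfl⟩
    have ha : (1 : ℝ) ≤ A.card := by exact_mod_cast Finset.card_pos.2 hA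
    have hb : (1 : ℝ) ≤ B.card := by exact_mod_cast Finset.card_pos.2 hB
    have hsa : (0 : ℝ) < Real.sqrt A.card := Real.sqrt_pos.2 (by linarith)
    have hsb : (0 : ℝ) < Real.sqrt B.card := Real.sqrt_pos.2 (by linarith)
    rw [le_div_iff₀ (by positivity)]
    have hN := part1 A B hA hB
    have hsa2 : Real.sqrt A.card ^ 2 = (A.card : ℝ) := Real.sq_sqrt (by linarith)
    have hsb2 : Real.sqrt B.card ^ 2 = (B.card : ℝ) := Real.sq_sqrt (by linarith)
    nlinarith [sq_nonneg (Real.sqrt A.card - Real.sqrt B.card)]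
end

section
/- Let 0 < δ < 1, p,q > 1 with 1/p+1/q = 1, and let g = (1, δ, …, δ^r), h = (1, δ, …, δ^s) be finite geometric sequences viewed as functions on {0,…,r} and {0,…,s} in ℤ. Then with f_δ = 1_{{0}} + δ·1_{{1}}, we have ‖f_δ □ g □ h‖₁ = (1−δ^{r+s+2})/(1−δ), ‖g‖_p^p = (1−δ^{p(r+1)})/(1−δ^p), ‖h‖_q^q = (1−δ^{q(s+1)})/(1−δ^q), and ‖f_δ □ g □ h‖₁ / (‖g‖_p ‖h‖_q) ≥ (1−δ^p)^{1/p}(1−δ^q)^{1/q}/(1−δ). -/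
/-- Max-convolution of real-valued functions. -/
noncomputable def maxConv {G : Type*} [AddCommGroup G] (u v : G → ℝ) : G → ℝ :=
  fun x => ⨆ t : G, u t * v (x - t)

noncomputable def geomF (δ : ℝ) (n : ℕ) : ℤ → ℝ :=
  fun i => if 0 ≤ i ∧ i ≤ (n : ℤ) then δ ^ i.toNat else 0


lemma iSup_eq_of {w : ℤ → ℝ} {c : ℝ} (hub : ∀ t, w t ≤ c) (hex : ∃ t, w t = c) :
    ⨆ t, w t = c := by
  obtain ⟨t0, ht0⟩ := hex
  exact le_antisymm (ciSup_le hub) (ht0 ▸ le_ciSup ⟨c, fun y ⟨t, ht⟩ => ht ▸ hub t⟩ t0)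

lemma maxConv_geomF (δ : ℝ) (hδ0 : 0 ≤ δ) (m n : ℕ) :
    maxConv (geomF δ m) (geomF δ n) = geomF δ (m + n) := by
  funext x
  show ⨆ t, geomF δ m t * geomF δ n (x - t) = _
  apply iSup_eq_of
  · intro t
    unfold geomF
    by_cases h1 : 0 ≤ t ∧ t ≤ (m : ℤ)
    · by_cases h2 : 0 ≤ x - t ∧ x - t ≤ (n : ℤ)
      · simp only [if_pos h1, if_pos h2]
        have hx : 0 ≤ x ∧ x ≤ ((m + n : ℕ) : ℤ) := by push_cast; omega
        rw [if_pos hx, ← pow_add]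
        have ht : t.toNat + (x - t).toNat = x.toNat := by omega
        rw [ht]
      · rw [if_neg h2, mul_zero]
        split <;> positivity
    · rw [if_neg h1, zero_mul]
      split <;> positivity
  · unfold geomF
    by_cases hx : 0 ≤ x ∧ x ≤ ((m + n : ℕ) : ℤ)
    · refine ⟨min x m, ?_⟩
      have h1 : 0 ≤ min x (m : ℤ) ∧ min x (m : ℤ) ≤ (m : ℤ) := by omega
      have h2 : 0 ≤ x - min x (m : ℤ) ∧ x - min x (m : ℤ) ≤ (n : ℤ) := by
        push_cast at hx ⊢; omega
      rw [if_pos h1, if_pos h2, if_pos hx, ← pow_add]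
      congr 1; omega
    · refine ⟨-1, ?_⟩
      rw [if_neg (by omega), zero_mul, if_neg hx]

lemma tsum_geomF (ε : ℝ) (hε1 : ε ≠ 1) (n : ℕ) :
    (∑' x : ℤ, geomF ε n x) = (1 - ε ^ (n + 1)) / (1 - ε) := by
  rw [tsum_eq_sum (s := Finset.Icc (0 : ℤ) (n : ℤ))
    (by intro b hb; rw [geomF, if_neg]; simpa [Finset.mem_Icc] using hb)]
  have hmap : Finset.Icc (0 : ℤ) (n : ℤ)
      = Finset.map ⟨fun i : ℕ => (i : ℤ), Nat.cast_injective⟩ (Finset.range (n + 1)) := by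
    ext x
    simp only [Finset.mem_Icc, Finset.mem_map, Finset.mem_range,
      Function.Embedding.coeFn_mk]
    constructor
    · rintro ⟨h0, h1⟩; exact ⟨x.toNat, by omega, by omega⟩
    · rintro ⟨i, hi, rfl⟩; omega
  rw [hmap, Finset.sum_map]
  have : ∀ i ∈ Finset.range (n + 1), geomF ε n ((⟨fun i : ℕ => (i : ℤ), Nat.cast_injective⟩ : ℕ ↪ ℤ) i) = ε ^ i := by
    intro i hi
    simp only [Finset.mem_range] at hi
    simp only [Function.Embedding.coeFn_mk]
    rw [geomF]
    rw [if_pos (by omega)]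
    simp
  rw [Finset.sum_congr rfl this, geom_sum_eq hε1,
    show ε ^ (n+1) - 1 = -(1 - ε ^ (n+1)) by ring, show ε - 1 = -(1 - ε) by ring,
    neg_div_neg_eq]

lemma final_ineq (δ p q : ℝ) (hδ0 : 0 < δ) (hδ1 : δ < 1)
    (hp : 1 < p) (hq : 1 < q) (hpq : 1/p + 1/q = 1) (r s : ℕ) :
    (1 - δ ^ p) ^ (1/p) * (1 - δ ^ q) ^ (1/q) / (1 - δ)
      * (((1 - δ ^ (p * (r + 1))) / (1 - δ ^ p)) ^ (1/p)
         * ((1 - δ ^ (q * (s + 1))) / (1 - δ ^ q)) ^ (1/q))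
    ≤ (1 - δ ^ (r + s + 2)) / (1 - δ) := by
  have hp0 : 0 < p := lt_trans one_pos hp
  have hq0 : 0 < q := lt_trans one_pos hq
  have hδp1 : δ ^ p < 1 := Real.rpow_lt_one hδ0.le hδ1 hp0
  have hδq1 : δ ^ q < 1 := Real.rpow_lt_one hδ0.le hδ1 hq0
  set A := δ ^ (p * (r + 1)) with hA
  set B := δ ^ (q * (s + 1)) with hB
  have hA0 : 0 < A := Real.rpow_pos_of_pos hδ0 _
  have hB0 : 0 < B := Real.rpow_pos_of_pos hδ0 _
  have hA1 : A < 1 := Real.rpow_lt_one hδ0.le hδ1 (by positivity)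
  have hB1 : B < 1 := Real.rpow_lt_one hδ0.le hδ1 (by positivity)
  have hdp : (0:ℝ) < 1 - δ ^ p := by linarith
  have hdq : (0:ℝ) < 1 - δ ^ q := by linarith
  have hdppow : (0:ℝ) < (1 - δ ^ p) ^ (1/p) := Real.rpow_pos_of_pos hdp _
  have hdqpow : (0:ℝ) < (1 - δ ^ q) ^ (1/q) := Real.rpow_pos_of_pos hdq _
  rw [Real.div_rpow (by linarith) hdp.le, Real.div_rpow (by linarith) hdq.le]
  have hLHS : (1 - δ ^ p) ^ (1/p) * (1 - δ ^ q) ^ (1/q) / (1 - δ)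
      * ((1 - A) ^ (1/p) / (1 - δ ^ p) ^ (1/p) * ((1 - B) ^ (1/q) / (1 - δ ^ q) ^ (1/q)))
      = (1 - A) ^ (1/p) * (1 - B) ^ (1/q) / (1 - δ) := by
    calc (1 - δ ^ p) ^ (1/p) * (1 - δ ^ q) ^ (1/q) / (1 - δ)
        * ((1 - A) ^ (1/p) / (1 - δ ^ p) ^ (1/p) * ((1 - B) ^ (1/q) / (1 - δ ^ q) ^ (1/q)))
        = (1 - A) ^ (1/p) * (1 - B) ^ (1/q) / (1 - δ)
          * ((1 - δ ^ p) ^ (1/p) / (1 - δ ^ p) ^ (1/p) * ((1 - δ ^ q) ^ (1/q) / (1 - δ ^ q) ^ (1/q))) := by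
          ring
      _ = (1 - A) ^ (1/p) * (1 - B) ^ (1/q) / (1 - δ) := by
          rw [div_self hdppow.ne', div_self hdqpow.ne', mul_one, mul_one]
  rw [hLHS, div_le_div_iff_of_pos_right (by linarith : (0:ℝ) < 1 - δ)]
  have hmean : (1 - A) ^ (1/p) * (1 - B) ^ (1/q) ≤ 1/p * (1 - A) + 1/q * (1 - B) :=
    Real.geom_mean_le_arith_mean2_weighted (by positivity) (by positivity)
      (by linarith) (by linarith) hpq
  have hyoung : A ^ (1/p) * B ^ (1/q) ≤ 1/p * A + 1/q * B :=
    Real.geom_mean_le_arith_mean2_weighted (by positivity) (by positivity)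
      hA0.le hB0.le hpq
  have hApow : A ^ (1/p) = δ ^ ((r:ℝ) + 1) := by
    rw [hA, ← Real.rpow_mul hδ0.le]
    congr 1
    field_simp
  have hBpow : B ^ (1/q) = δ ^ ((s:ℝ) + 1) := by
    rw [hB, ← Real.rpow_mul hδ0.le]
    congr 1
    field_simp
  have hprod : A ^ (1/p) * B ^ (1/q) = δ ^ (r + s + 2) := by
    rw [hApow, hBpow, ← Real.rpow_add hδ0, ← Real.rpow_natCast δ (r + s + 2)]
    congr 1
    push_cast
    ring
  rw [hprod] at hyoung
  calc (1 - A) ^ (1/p) * (1 - B) ^ (1/q) ≤ 1/p * (1 - A) + 1/q * (1 - B) := hmean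
    _ = 1/p + 1/q - (1/p * A + 1/q * B) := by ring
    _ ≤ 1/p + 1/q - δ ^ (r + s + 2) := by linarith
    _ = 1 - δ ^ (r + s + 2) := by rw [hpq]


/-- For geometric sequences g = (1,δ,…,δ^r), h = (1,δ,…,δ^s) and
f_δ = 1_{0} + δ·1_{1}: explicit formulas for ‖f_δ □ g □ h‖₁, ‖g‖_p^p, ‖h‖_q^q,
and the ratio bound ‖f_δ □ g □ h‖₁/(‖g‖_p ‖h‖_q) ≥ (1−δ^p)^(1/p)(1−δ^q)^(1/q)/(1−δ). -/
theorem stmt16 (δ p q : ℝ) (hδ0 : 0 < δ) (hδ1 : δ < 1)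
    (hp : 1 < p) (hq : 1 < q) (hpq : 1/p + 1/q = 1) (r s : ℕ) :
    (let f : ℤ → ℝ := fun x => if x = 0 then 1 else if x = 1 then δ else 0
     let g : ℤ → ℝ := fun i => if 0 ≤ i ∧ i ≤ (r : ℤ) then δ ^ i.toNat else 0
     let h : ℤ → ℝ := fun j => if 0 ≤ j ∧ j ≤ (s : ℤ) then δ ^ j.toNat else 0
     (∑' x : ℤ, maxConv (maxConv f g) h x) = (1 - δ ^ (r + s + 2)) / (1 - δ) ∧
     (∑' i : ℤ, g i ^ p) = (1 - δ ^ (p * (r + 1))) / (1 - δ ^ p) ∧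
     (∑' j : ℤ, h j ^ q) = (1 - δ ^ (q * (s + 1))) / (1 - δ ^ q) ∧
     (1 - δ ^ p) ^ (1/p) * (1 - δ ^ q) ^ (1/q) / (1 - δ)
         * ((∑' i : ℤ, g i ^ p) ^ (1/p) * (∑' j : ℤ, h j ^ q) ^ (1/q))
       ≤ ∑' x : ℤ, maxConv (maxConv f g) h x) := by
  intro f g h
  have hp0 : 0 < p := lt_trans one_pos hp
  have hq0 : 0 < q := lt_trans one_pos hq
  have hδp1 : δ ^ p < 1 := Real.rpow_lt_one hδ0.le hδ1 hp0
  have hδq1 : δ ^ q < 1 := Real.rpow_lt_one hδ0.le hδ1 hq0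
  have hf : f = geomF δ 1 := by
    funext x
    show (if x = 0 then 1 else if x = 1 then δ else 0)
        = if 0 ≤ x ∧ x ≤ ((1:ℕ) : ℤ) then δ ^ x.toNat else 0
    by_cases h0 : x = 0
    · subst h0; norm_num
    · by_cases h1 : x = 1
      · subst h1; norm_num
      · rw [if_neg h0, if_neg h1, if_neg (by omega)]
  have hconv : maxConv (maxConv f g) h = geomF δ (1 + r + s) := by
    have h1 : maxConv f g = geomF δ (1 + r) := by
      rw [hf, show g = geomF δ r from rfl, maxConv_geomF δ hδ0.le]
    rw [h1, show h = geomF δ s from rfl, maxConv_geomF δ hδ0.le]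
  have H1 : (∑' x : ℤ, maxConv (maxConv f g) h x) = (1 - δ ^ (r + s + 2)) / (1 - δ) := by
    rw [hconv, tsum_geomF δ hδ1.ne, show 1 + r + s + 1 = r + s + 2 by omega]
  have hgp : (fun i : ℤ => g i ^ p) = geomF (δ ^ p) r := by
    funext i
    show (if 0 ≤ i ∧ i ≤ (r : ℤ) then δ ^ i.toNat else 0) ^ p
        = if 0 ≤ i ∧ i ≤ (r : ℤ) then (δ ^ p) ^ i.toNat else 0
    by_cases hi : 0 ≤ i ∧ i ≤ (r : ℤ)
    · rw [if_pos hi, if_pos hi, ← Real.rpow_natCast δ i.toNat, ← Real.rpow_mul hδ0.le,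
        mul_comm, Real.rpow_mul hδ0.le, Real.rpow_natCast]
    · rw [if_neg hi, if_neg hi, Real.zero_rpow hp0.ne']
  have hhq : (fun j : ℤ => h j ^ q) = geomF (δ ^ q) s := by
    funext j
    show (if 0 ≤ j ∧ j ≤ (s : ℤ) then δ ^ j.toNat else 0) ^ q
        = if 0 ≤ j ∧ j ≤ (s : ℤ) then (δ ^ q) ^ j.toNat else 0
    by_cases hj : 0 ≤ j ∧ j ≤ (s : ℤ)
    · rw [if_pos hj, if_pos hj, ← Real.rpow_natCast δ j.toNat, ← Real.rpow_mul hδ0.le,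
        mul_comm, Real.rpow_mul hδ0.le, Real.rpow_natCast]
    · rw [if_neg hj, if_neg hj, Real.zero_rpow hq0.ne']
  have epow : ∀ (c : ℝ) (n : ℕ), ((δ ^ c) ^ (n + 1) : ℝ) = δ ^ (c * ((n:ℝ) + 1)) := by
    intro c n
    rw [← Real.rpow_natCast (δ ^ c) (n + 1), ← Real.rpow_mul hδ0.le]
    congr 1
    push_cast
    ring
  have H2 : (∑' i : ℤ, g i ^ p) = (1 - δ ^ (p * (r + 1))) / (1 - δ ^ p) := by
    rw [show (∑' i : ℤ, g i ^ p) = ∑' i : ℤ, geomF (δ ^ p) r i from by rw [hgp],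
      tsum_geomF (δ ^ p) hδp1.ne r, epow p r]
  have H3 : (∑' j : ℤ, h j ^ q) = (1 - δ ^ (q * (s + 1))) / (1 - δ ^ q) := by
    rw [show (∑' j : ℤ, h j ^ q) = ∑' j : ℤ, geomF (δ ^ q) s j from by rw [hhq],
      tsum_geomF (δ ^ q) hδq1.ne s, epow q s]
  refine ⟨H1, H2, H3, ?_⟩
  rw [H1, H2, H3]
  exact final_ineq δ p q hδ0 hδ1 hp hq hpq r s
end

section
/- Let f, g, h: ℤ → ℝ≥0 be nonincreasing finitely supported functions supported on initial segments {0,…,a}, {0,…,b}, {0,…,c}, and let σ, τ, ρ be permutations of these supports. Then ‖(f∘σ) □ (g∘τ) □ (h∘ρ)‖₁ ≥ ‖f □ g □ h‖₁ when f,g,h are nonincreasing; i.e., the ℓ¹ norm of the max-convolution is minimized for the nonincreasing arrangement. -/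
lemma isup_attained (w : ℤ → ℝ) (h0 : ∀ t, 0 ≤ w t) (S : Finset ℤ)
    (hs : ∀ t, w t ≠ 0 → t ∈ S) :
    ∃ t₀ : ℤ, (∀ t, w t ≤ w t₀) ∧ (⨆ t, w t) = w t₀ := by
  obtain ⟨x₀, hx₀⟩ := Infinite.exists_notMem_finset S
  have hne : (insert x₀ S).Nonempty := Finset.insert_nonempty _ _
  obtain ⟨t₀, ht₀mem, ht₀⟩ := Finset.exists_mem_eq_sup' hne w
  have hmax : ∀ t, w t ≤ w t₀ := by
    intro t
    by_cases ht : t ∈ insert x₀ S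
    · calc w t ≤ (insert x₀ S).sup' hne w := Finset.le_sup' w ht
        _ = w t₀ := ht₀
  -- note direction of ht₀
    · have hwt : w t = 0 := by
        by_contra hne'
        exact ht (Finset.mem_insert_of_mem (hs t hne'))
      rw [hwt]; exact h0 t₀
  refine ⟨t₀, hmax, le_antisymm (ciSup_le hmax) (le_ciSup ⟨w t₀, ?_⟩ t₀)⟩
  rintro y ⟨t, rfl⟩
  exact hmax t

lemma maxConv_attained (u v : ℤ → ℝ) (hu0 : ∀ t, 0 ≤ u t) (hv0 : ∀ t, 0 ≤ v t)
    (S : Finset ℤ) (hus : ∀ t, u t ≠ 0 → t ∈ S) (x : ℤ) :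
    ∃ t₀ : ℤ, maxConv u v x = u t₀ * v (x - t₀) ∧
      ∀ t, u t * v (x - t) ≤ u t₀ * v (x - t₀) := by
  obtain ⟨t₀, hmax, hsup⟩ := isup_attained (fun t => u t * v (x - t))
    (fun t => mul_nonneg (hu0 t) (hv0 _)) S
    (fun t ht => hus t (left_ne_zero_of_mul ht))
  exact ⟨t₀, hsup, hmax⟩

lemma maxConv_nonneg (u v : ℤ → ℝ) (hu0 : ∀ t, 0 ≤ u t) (hv0 : ∀ t, 0 ≤ v t)
    (S : Finset ℤ) (hus : ∀ t, u t ≠ 0 → t ∈ S) (x : ℤ) : 0 ≤ maxConv u v x := by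
  obtain ⟨t₀, heq, _⟩ := maxConv_attained u v hu0 hv0 S hus x
  rw [heq]; exact mul_nonneg (hu0 _) (hv0 _)

lemma le_maxConv (u v : ℤ → ℝ) (hu0 : ∀ t, 0 ≤ u t) (hv0 : ∀ t, 0 ≤ v t)
    (S : Finset ℤ) (hus : ∀ t, u t ≠ 0 → t ∈ S) (x t : ℤ) :
    u t * v (x - t) ≤ maxConv u v x := by
  obtain ⟨t₀, heq, hmax⟩ := maxConv_attained u v hu0 hv0 S hus x
  rw [heq]; exact hmax t

lemma maxConv_support (u v : ℤ → ℝ) (hu0 : ∀ t, 0 ≤ u t) (hv0 : ∀ t, 0 ≤ v t)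
    (A B : ℤ) (hus : ∀ t, u t ≠ 0 → t ∈ Finset.Icc 0 A)
    (hvs : ∀ t, v t ≠ 0 → t ∈ Finset.Icc 0 B) :
    ∀ x, maxConv u v x ≠ 0 → x ∈ Finset.Icc (0:ℤ) (A+B) := by
  intro x hx
  obtain ⟨t₀, heq, _⟩ := maxConv_attained u v hu0 hv0 _ hus x
  rw [heq] at hx
  have h1 := hus t₀ (left_ne_zero_of_mul hx)
  have h2 := hvs _ (right_ne_zero_of_mul hx)
  simp only [Finset.mem_Icc] at h1 h2 ⊢
  omega

lemma maxConv_mono (u v : ℤ → ℝ) (hu0 : ∀ t, 0 ≤ u t) (hv0 : ∀ t, 0 ≤ v t)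
    (A B : ℤ) (hus : ∀ t, u t ≠ 0 → t ∈ Finset.Icc 0 A)
    (hvs : ∀ t, v t ≠ 0 → t ∈ Finset.Icc 0 B)
    (hum : ∀ x y : ℤ, 0 ≤ x → x ≤ y → u y ≤ u x)
    (hvm : ∀ x y : ℤ, 0 ≤ x → x ≤ y → v y ≤ v x) :
    ∀ x y : ℤ, 0 ≤ x → x ≤ y → maxConv u v y ≤ maxConv u v x := by
  intro x y hx hxy
  obtain ⟨t₀, hy, _⟩ := maxConv_attained u v hu0 hv0 _ hus y
  rw [hy]
  by_cases hz : u t₀ * v (y - t₀) = 0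
  · rw [hz]; exact maxConv_nonneg u v hu0 hv0 _ hus x
  have h1 := hus _ (left_ne_zero_of_mul hz)
  have h2 := hvs _ (right_ne_zero_of_mul hz)
  simp only [Finset.mem_Icc] at h1 h2
  by_cases hc : t₀ ≤ x
  · have : u t₀ * v (y - t₀) ≤ u t₀ * v (x - t₀) :=
      mul_le_mul_of_nonneg_left (hvm (x - t₀) (y - t₀) (by omega) (by omega)) (hu0 t₀)
    exact this.trans (le_maxConv u v hu0 hv0 _ hus x t₀)
  · have : u t₀ * v (y - t₀) ≤ u x * v (x - x) := by
      rw [sub_self]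
      exact mul_le_mul (hum x t₀ hx (by omega)) (hvm 0 (y - t₀) le_rfl (by omega))
        (hv0 _) (hu0 x)
    exact this.trans (le_maxConv u v hu0 hv0 _ hus x x)
open Finset Pointwise
lemma sorted_sum_le (N : ℕ) (F G : ℤ → ℝ)
    (hF0 : ∀ x, 0 ≤ F x) (hG0 : ∀ x, 0 ≤ G x)
    (hcard : ∀ m : ℕ, m ≤ N → F (m:ℤ) ≠ 0 →
      ∃ s : Finset ℤ, s ⊆ Finset.Icc (0:ℤ) (N:ℤ) ∧ (∀ x ∈ s, F (m:ℤ) ≤ G x) ∧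
        m + 1 ≤ s.card) :
    ∑ x ∈ Finset.Icc (0:ℤ) (N:ℤ), F x ≤ ∑ x ∈ Finset.Icc (0:ℤ) (N:ℤ), G x := by
  classical
  set I : Finset ℤ := Finset.Icc (0:ℤ) (N:ℤ) with hI
  have hIcard : I.card = N + 1 := by
    rw [hI, Int.card_Icc]; omega
  set t : Fin (N+1) → Finset ℤ := fun m => I.filter (fun x => F ((m:ℕ):ℤ) ≤ G x) with ht
  have htcard : ∀ m : Fin (N+1), (m:ℕ) + 1 ≤ (t m).card := by
    intro m
    by_cases hFm : F ((m:ℕ):ℤ) = 0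
    · have : t m = I := by
        rw [ht]
        exact Finset.filter_true_of_mem (fun x _ => hFm ▸ hG0 x)
      rw [this, hIcard]; omega
    · obtain ⟨s, hsI, hsG, hscard⟩ := hcard m (by omega) hFm
      refine hscard.trans (Finset.card_le_card ?_)
      intro x hx
      exact Finset.mem_filter.2 ⟨hsI hx, hsG x hx⟩
  have hall : ∀ s : Finset (Fin (N+1)), s.card ≤ (s.biUnion t).card := by
    intro s
    rcases s.eq_empty_or_nonempty with rfl | hs
    · simp
    have hM : s.max' hs ∈ s := s.max'_mem hs
    have h1 : t (s.max' hs) ⊆ s.biUnion t := Finset.subset_biUnion_of_mem t hM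
    have h2 : s.card ≤ (s.max' hs : ℕ) + 1 := by
      have : s ⊆ Finset.Iic (s.max' hs) := fun x hx => Finset.mem_Iic.2 (s.le_max' x hx)
      calc s.card ≤ (Finset.Iic (s.max' hs)).card := Finset.card_le_card this
        _ = (s.max' hs : ℕ) + 1 := by rw [Fin.card_Iic]
    exact h2.trans ((htcard _).trans (Finset.card_le_card h1))
  obtain ⟨e, einj, he⟩ := (Finset.all_card_le_biUnion_card_iff_exists_injective t).1 hall
  have hIrange : I = (Finset.range (N+1)).map ⟨(Nat.cast : ℕ → ℤ), fun _ _ => Int.natCast_inj.mp⟩ := by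
    ext x
    simp only [hI, Finset.mem_Icc, Finset.mem_map, Finset.mem_range,
      Function.Embedding.coeFn_mk]
    constructor
    · rintro ⟨h1, h2⟩; exact ⟨x.toNat, by omega, Int.toNat_of_nonneg h1⟩
    · rintro ⟨m, hm, rfl⟩; exact ⟨Int.natCast_nonneg m, Int.ofNat_le.mpr (Nat.lt_succ_iff.mp hm)⟩
  calc ∑ x ∈ I, F x = ∑ m ∈ Finset.range (N+1), F (m:ℤ) := by
        rw [hIrange, Finset.sum_map]; rfl
    _ = ∑ m : Fin (N+1), F ((m:ℕ):ℤ) := (Fin.sum_univ_eq_sum_range (fun m => F (m:ℤ)) (N+1)).symm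
    _ ≤ ∑ m : Fin (N+1), G (e m) := by
        refine Finset.sum_le_sum fun m _ => ?_
        exact (Finset.mem_filter.1 (he m)).2
    _ = ∑ x ∈ Finset.univ.image e, G x := by
        rw [Finset.sum_image (fun x _ y _ hxy => einj hxy)]
    _ ≤ ∑ x ∈ I, G x := by
        refine Finset.sum_le_sum_of_subset_of_nonneg ?_ (fun x _ _ => hG0 x)
        intro x hx
        obtain ⟨m, _, rfl⟩ := Finset.mem_image.1 hx
        exact Finset.filter_subset _ _ (he m)

/-- The ℓ¹ norm of the max-convolution of functions supported on initial segments
is minimized by the nonincreasing arrangements: if f, g, h are nonnegative,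
nonincreasing and supported on {0,…,a}, {0,…,b}, {0,…,c} respectively, and
σ, τ, ρ are permutations of these supports, then
‖f □ g □ h‖₁ ≤ ‖(f∘σ) □ (g∘τ) □ (h∘ρ)‖₁. -/
theorem stmt17 (a b c : ℕ) (f g h : ℤ → ℝ)
    (hf0 : ∀ x, 0 ≤ f x) (hg0 : ∀ x, 0 ≤ g x) (hh0 : ∀ x, 0 ≤ h x)
    (hfs : ∀ x, f x ≠ 0 → x ∈ Finset.Icc (0 : ℤ) (a : ℤ))
    (hgs : ∀ x, g x ≠ 0 → x ∈ Finset.Icc (0 : ℤ) (b : ℤ))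
    (hhs : ∀ x, h x ≠ 0 → x ∈ Finset.Icc (0 : ℤ) (c : ℤ))
    (hfm : ∀ x y : ℤ, 0 ≤ x → x ≤ y → f y ≤ f x)
    (hgm : ∀ x y : ℤ, 0 ≤ x → x ≤ y → g y ≤ g x)
    (hhm : ∀ x y : ℤ, 0 ≤ x → x ≤ y → h y ≤ h x)
    (σ τ ρ : Equiv.Perm ℤ)
    (hσ : ∀ x : ℤ, x ∉ Finset.Icc (0 : ℤ) (a : ℤ) → σ x = x)
    (hτ : ∀ x : ℤ, x ∉ Finset.Icc (0 : ℤ) (b : ℤ) → τ x = x)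
    (hρ : ∀ x : ℤ, x ∉ Finset.Icc (0 : ℤ) (c : ℤ) → ρ x = x) :
    (∑' x : ℤ, maxConv (maxConv f g) h x)
      ≤ ∑' x : ℤ, maxConv (maxConv (f ∘ σ) (g ∘ τ)) (h ∘ ρ) x := by
  classical
  -- composed functions basic facts
  have hfσ0 : ∀ x, 0 ≤ (f ∘ σ) x := fun x => hf0 (σ x)
  have hgτ0 : ∀ x, 0 ≤ (g ∘ τ) x := fun x => hg0 (τ x)
  have hhρ0 : ∀ x, 0 ≤ (h ∘ ρ) x := fun x => hh0 (ρ x)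
  have hfσs : ∀ x, (f ∘ σ) x ≠ 0 → x ∈ Finset.Icc (0:ℤ) (a:ℤ) := by
    intro x hx
    by_contra hmem
    rw [Function.comp_apply, hσ x hmem] at hx
    exact hmem (hfs x hx)
  have hgτs : ∀ x, (g ∘ τ) x ≠ 0 → x ∈ Finset.Icc (0:ℤ) (b:ℤ) := by
    intro x hx
    by_contra hmem
    rw [Function.comp_apply, hτ x hmem] at hx
    exact hmem (hgs x hx)
  have hhρs : ∀ x, (h ∘ ρ) x ≠ 0 → x ∈ Finset.Icc (0:ℤ) (c:ℤ) := by
    intro x hx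
    by_contra hmem
    rw [Function.comp_apply, hρ x hmem] at hx
    exact hmem (hhs x hx)
  -- the convolutions
  set P := maxConv f g with hPdef
  set F := maxConv P h with hFdef
  set Q := maxConv (f ∘ σ) (g ∘ τ) with hQdef
  set G := maxConv Q (h ∘ ρ) with hGdef
  have hP0 : ∀ x, 0 ≤ P x := maxConv_nonneg f g hf0 hg0 _ hfs
  have hPs : ∀ x, P x ≠ 0 → x ∈ Finset.Icc (0:ℤ) ((a:ℤ)+(b:ℤ)) :=
    maxConv_support f g hf0 hg0 _ _ hfs hgs
  have hPm : ∀ x y : ℤ, 0 ≤ x → x ≤ y → P y ≤ P x :=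
    maxConv_mono f g hf0 hg0 _ _ hfs hgs hfm hgm
  have hF0 : ∀ x, 0 ≤ F x := maxConv_nonneg P h hP0 hh0 _ hPs
  have hFs : ∀ x, F x ≠ 0 → x ∈ Finset.Icc (0:ℤ) (((a:ℤ)+(b:ℤ))+(c:ℤ)) :=
    maxConv_support P h hP0 hh0 _ _ hPs hhs
  have hQ0 : ∀ x, 0 ≤ Q x := maxConv_nonneg _ _ hfσ0 hgτ0 _ hfσs
  have hQs : ∀ x, Q x ≠ 0 → x ∈ Finset.Icc (0:ℤ) ((a:ℤ)+(b:ℤ)) :=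
    maxConv_support _ _ hfσ0 hgτ0 _ _ hfσs hgτs
  have hG0 : ∀ x, 0 ≤ G x := maxConv_nonneg _ _ hQ0 hhρ0 _ hQs
  have hGs : ∀ x, G x ≠ 0 → x ∈ Finset.Icc (0:ℤ) (((a:ℤ)+(b:ℤ))+(c:ℤ)) :=
    maxConv_support _ _ hQ0 hhρ0 _ _ hQs hhρs
  set N : ℕ := a + b + c with hNdef
  have hNcast : ((N:ℕ):ℤ) = ((a:ℤ)+(b:ℤ))+(c:ℤ) := by push_cast [hNdef]; ring
  -- tsum to finite sums
  have hL : ∑' x : ℤ, F x = ∑ x ∈ Finset.Icc (0:ℤ) (N:ℤ), F x := by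
    refine tsum_eq_sum fun x hx => ?_
    by_contra hne
    exact hx (hNcast ▸ hFs x hne)
  have hR : ∑' x : ℤ, G x = ∑ x ∈ Finset.Icc (0:ℤ) (N:ℤ), G x := by
    refine tsum_eq_sum fun x hx => ?_
    by_contra hne
    exact hx (hNcast ▸ hGs x hne)
  rw [hL, hR]
  refine sorted_sum_le N F G hF0 hG0 ?_
  -- the key counting estimate
  intro m hm hFm
  obtain ⟨t₁, hFeq, _⟩ := maxConv_attained P h hP0 hh0 _ hPs (m:ℤ)
  rw [← hFdef] at hFeq
  rw [hFeq] at hFm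
  have hPne : P t₁ ≠ 0 := left_ne_zero_of_mul hFm
  have hhne : h ((m:ℤ) - t₁) ≠ 0 := right_ne_zero_of_mul hFm
  obtain ⟨i, hPeq, _⟩ := maxConv_attained f g hf0 hg0 _ hfs t₁
  rw [← hPdef] at hPeq
  have hfne : f i ≠ 0 := left_ne_zero_of_mul (hPeq ▸ hPne)
  have hgne : g (t₁ - i) ≠ 0 := right_ne_zero_of_mul (hPeq ▸ hPne)
  have hi := hfs i hfne
  have hj := hgs _ hgne
  have hk := hhs _ hhne
  simp only [Finset.mem_Icc] at hi hj hk
  set j : ℤ := t₁ - i with hjdef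
  set k : ℤ := (m:ℤ) - t₁ with hkdef
  -- the three large sets
  set X : Finset ℤ := (Finset.Icc (0:ℤ) i).image σ.symm with hXdef
  set Y : Finset ℤ := (Finset.Icc (0:ℤ) j).image τ.symm with hYdef
  set Z : Finset ℤ := (Finset.Icc (0:ℤ) k).image ρ.symm with hZdef
  have hXcard : X.card = i.toNat + 1 := by
    rw [hXdef, Finset.card_image_of_injective _ (Equiv.injective _), Int.card_Icc]; omega
  have hYcard : Y.card = j.toNat + 1 := by
    rw [hYdef, Finset.card_image_of_injective _ (Equiv.injective _), Int.card_Icc]; omega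
  have hZcard : Z.card = k.toNat + 1 := by
    rw [hZdef, Finset.card_image_of_injective _ (Equiv.injective _), Int.card_Icc]; omega
  have hXne : X.Nonempty := Finset.card_pos.1 (by omega)
  have hYne : Y.Nonempty := Finset.card_pos.1 (by omega)
  have hZne : Z.Nonempty := Finset.card_pos.1 (by omega)
  have hXmem : ∀ p ∈ X, (0 ≤ σ p ∧ σ p ≤ i) ∧ (0 ≤ p ∧ p ≤ (a:ℤ)) := by
    intro p hp
    obtain ⟨p', hp', rfl⟩ := Finset.mem_image.1 hp
    simp only [Finset.mem_Icc] at hp'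
    rw [Equiv.apply_symm_apply]
    refine ⟨hp', ?_⟩
    by_contra hmem
    have h1 : σ.symm p' ∉ Finset.Icc (0:ℤ) (a:ℤ) := by
      simp only [Finset.mem_Icc]; omega
    have h2 := hσ _ h1
    rw [Equiv.apply_symm_apply] at h2
    rw [← h2] at h1
    simp only [Finset.mem_Icc] at h1
    omega
  have hYmem : ∀ p ∈ Y, (0 ≤ τ p ∧ τ p ≤ j) ∧ (0 ≤ p ∧ p ≤ (b:ℤ)) := by
    intro p hp
    obtain ⟨p', hp', rfl⟩ := Finset.mem_image.1 hp
    simp only [Finset.mem_Icc] at hp'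
    rw [Equiv.apply_symm_apply]
    refine ⟨hp', ?_⟩
    by_contra hmem
    have h1 : τ.symm p' ∉ Finset.Icc (0:ℤ) (b:ℤ) := by
      simp only [Finset.mem_Icc]; omega
    have h2 := hτ _ h1
    rw [Equiv.apply_symm_apply] at h2
    rw [← h2] at h1
    simp only [Finset.mem_Icc] at h1
    omega
  have hZmem : ∀ p ∈ Z, (0 ≤ ρ p ∧ ρ p ≤ k) ∧ (0 ≤ p ∧ p ≤ (c:ℤ)) := by
    intro p hp
    obtain ⟨p', hp', rfl⟩ := Finset.mem_image.1 hp
    simp only [Finset.mem_Icc] at hp'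
    rw [Equiv.apply_symm_apply]
    refine ⟨hp', ?_⟩
    by_contra hmem
    have h1 : ρ.symm p' ∉ Finset.Icc (0:ℤ) (c:ℤ) := by
      simp only [Finset.mem_Icc]; omega
    have h2 := hρ _ h1
    rw [Equiv.apply_symm_apply] at h2
    rw [← h2] at h1
    simp only [Finset.mem_Icc] at h1
    omega
  refine ⟨X + Y + Z, ?_, ?_, ?_⟩
  · -- subset of the ground interval
    intro x hx
    obtain ⟨pq, hpq, r, hr, rfl⟩ := Finset.mem_add.1 hx
    obtain ⟨p, hp, q, hq, rfl⟩ := Finset.mem_add.1 hpq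
    have h1 := (hXmem p hp).2
    have h2 := (hYmem q hq).2
    have h3 := (hZmem r hr).2
    simp only [Finset.mem_Icc]
    omega
  · -- the value bound
    intro x hx
    obtain ⟨pq, hpq, r, hr, rfl⟩ := Finset.mem_add.1 hx
    obtain ⟨p, hp, q, hq, rfl⟩ := Finset.mem_add.1 hpq
    obtain ⟨hσp, _⟩ := hXmem p hp
    obtain ⟨hτq, _⟩ := hYmem q hq
    obtain ⟨hρr, _⟩ := hZmem r hr
    rw [hFeq]
    have e1 : f i ≤ (f ∘ σ) p := hfm (σ p) i hσp.1 hσp.2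
    have e2 : g j ≤ (g ∘ τ) q := hgm (τ q) j hτq.1 hτq.2
    have e3 : h k ≤ (h ∘ ρ) r := hhm (ρ r) k hρr.1 hρr.2
    have step1 : P t₁ * h ((m:ℤ) - t₁) = (f i * g j) * h k := by rw [hPeq]
    have step2 : (f i * g j) * h k ≤ ((f ∘ σ) p * (g ∘ τ) q) * (h ∘ ρ) r := by
      refine mul_le_mul (mul_le_mul e1 e2 (hg0 j) (hfσ0 p)) e3 (hh0 k) ?_
      exact mul_nonneg (hfσ0 p) (hgτ0 q)
    have step3 : (f ∘ σ) p * (g ∘ τ) q ≤ Q (p + q) := by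
      have := le_maxConv (f ∘ σ) (g ∘ τ) hfσ0 hgτ0 _ hfσs (p + q) p
      rwa [add_sub_cancel_left, ← hQdef] at this
    have step4 : Q (p + q) * (h ∘ ρ) r ≤ G (p + q + r) := by
      have := le_maxConv Q (h ∘ ρ) hQ0 hhρ0 _ hQs (p + q + r) (p + q)
      rwa [add_sub_cancel_left, ← hGdef] at this
    calc P t₁ * h ((m:ℤ) - t₁) = (f i * g j) * h k := step1
      _ ≤ ((f ∘ σ) p * (g ∘ τ) q) * (h ∘ ρ) r := step2
      _ ≤ Q (p + q) * (h ∘ ρ) r := mul_le_mul_of_nonneg_right step3 (hhρ0 r)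
      _ ≤ G (p + q + r) := step4
  · -- the cardinality bound via Cauchy–Davenport
    have h1 := cauchy_davenport_add_of_linearOrder_isCancelAdd hXne hYne
    have h2 := cauchy_davenport_add_of_linearOrder_isCancelAdd (hXne.add hYne) hZne
    have hijk : i + j + k = (m:ℤ) := by rw [hjdef, hkdef]; ring
    omega
end
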